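/- arXiv:math/0608558 — 13 statements merged into one kernel-verified Lean document; each statement's English description precedes it below -/
import Mathlib

section
/- If Q₁ and Q₂ are orthogonal LU-positive matrices and E is a diagonal matrix with entries ±1 such that Q₂ = E·Q₁, then E = I and hence Q₁ = Q₂. -/
open Matrix

/-- `L` is lower triangular with unit diagonal. -/
def IsUnipLower {n : ℕ} (L : Matrix (Fin n) (Fin n) ℝ) : Prop :=
  (∀ i j : Fin n, i < j → L i j = 0) ∧ ∀ i : Fin n, L i i = 1

/-- `U` is upper triangular with strictly positive diagonal. -/
def IsUpperTriPos {n : ℕ} (U : Matrix (Fin n) (Fin n) ℝ) : Prop :=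
  (∀ i j : Fin n, j < i → U i j = 0) ∧ ∀ i : Fin n, 0 < U i i

/-- The leading principal minor of order `k` of `M`. -/
def leadingMinor {n : ℕ} (M : Matrix (Fin n) (Fin n) ℝ) (k : ℕ) (h : k ≤ n) : ℝ :=
  (Matrix.of fun i j : Fin k => M (Fin.castLE h i) (Fin.castLE h j)).det

/-- `M` is LU-positive: all leading principal minors are strictly positive. -/
def LUPositive {n : ℕ} (M : Matrix (Fin n) (Fin n) ℝ) : Prop :=
  ∀ k (h : k ≤ n), 0 < leadingMinor M k h

/-- `Q` is orthogonal. -/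
def IsOrth {n : ℕ} (Q : Matrix (Fin n) (Fin n) ℝ) : Prop := Qᵀ * Q = 1

/-- `E` is a sign diagonal `diag(±1, …, ±1)`. -/
def IsSignDiag {n : ℕ} (E : Matrix (Fin n) (Fin n) ℝ) : Prop :=
  (∀ i j : Fin n, i ≠ j → E i j = 0) ∧ ∀ i : Fin n, E i i = 1 ∨ E i i = -1

/-- `M` is tridiagonal. -/
def IsTridiag {n : ℕ} (M : Matrix (Fin n) (Fin n) ℝ) : Prop :=
  ∀ i j : Fin n, ((i : ℕ) + 1 < (j : ℕ) ∨ (j : ℕ) + 1 < (i : ℕ)) → M i j = 0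

/-- If `Q₁`, `Q₂` are orthogonal LU-positive matrices and `E` is a sign diagonal with
`Q₂ = E * Q₁`, then `E = 1` and `Q₁ = Q₂`. -/
theorem stmt2 (n : ℕ) (Q₁ Q₂ E : Matrix (Fin n) (Fin n) ℝ)
    (hQ₁ : IsOrth Q₁) (hQ₂ : IsOrth Q₂)
    (hLU₁ : LUPositive Q₁) (hLU₂ : LUPositive Q₂)
    (hE : IsSignDiag E) (heq : Q₂ = E * Q₁) :
    E = 1 ∧ Q₁ = Q₂ := by
  obtain ⟨hoff, hdiag⟩ := hE
  -- entrywise formula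
  have hmul : ∀ i j : Fin n, Q₂ i j = E i i * Q₁ i j := by
    intro i j
    rw [heq]
    simp only [Matrix.mul_apply]
    rw [Finset.sum_eq_single i]
    · intro b _ hb; rw [hoff i b (Ne.symm hb), zero_mul]
    · intro h; exact absurd (Finset.mem_univ i) h
  -- minors relation
  have hminor : ∀ k (h : k ≤ n),
      leadingMinor Q₂ k h =
        (∏ i : Fin k, E (Fin.castLE h i) (Fin.castLE h i)) * leadingMinor Q₁ k h := by
    intro k h
    unfold leadingMinor
    have : (Matrix.of fun i j : Fin k => Q₂ (Fin.castLE h i) (Fin.castLE h j)) =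
        Matrix.of fun i j : Fin k =>
          E (Fin.castLE h i) (Fin.castLE h i) *
            (Matrix.of fun i j : Fin k => Q₁ (Fin.castLE h i) (Fin.castLE h j)) i j := by
      ext i j; simp [hmul]
    rw [this]
    exact Matrix.det_mul_column (fun i : Fin k => E (Fin.castLE h i) (Fin.castLE h i)) _
  -- partial products positive
  have hP : ∀ k (h : k ≤ n), 0 < ∏ i : Fin k, E (Fin.castLE h i) (Fin.castLE h i) := by
    intro k h
    have h1 := hLU₁ k h
    have h2 := hLU₂ k h
    have := hminor k h
    nlinarith [this, h1, h2]
  -- each diagonal entry is 1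
  have hone : ∀ i : Fin n, E i i = 1 := by
    intro i
    have hk : (i : ℕ) ≤ n := le_of_lt i.isLt
    have hk1 : (i : ℕ) + 1 ≤ n := i.isLt
    have p1 := hP i hk
    have p2 := hP ((i : ℕ) + 1) hk1
    rw [Fin.prod_univ_castSucc] at p2
    have hcast : ∀ j : Fin (i : ℕ), Fin.castLE hk1 j.castSucc = Fin.castLE hk j := by
      intro j; rfl
    have hlast : Fin.castLE hk1 (Fin.last (i : ℕ)) = i := by
      apply Fin.ext; rfl
    simp only [hcast, hlast] at p2
    have hpos : 0 < E i i := by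
      by_contra hle
      push_neg at hle
      nlinarith [p1, p2]
    rcases hdiag i with h1 | h1
    · exact h1
    · rw [h1] at hpos; linarith
  have hE1 : E = 1 := by
    ext i j
    by_cases hij : i = j
    · subst hij; rw [hone i, Matrix.one_apply_eq]
    · rw [hoff i j hij, Matrix.one_apply_ne hij]
  refine ⟨hE1, ?_⟩
  rw [heq, hE1, Matrix.one_mul]
end

section
/- Let Λ be a real diagonal matrix with pairwise distinct diagonal entries λ₁,...,λₙ and let w ∈ ℝⁿ have all coordinates nonzero with ‖w‖ = 1. Let W = diag(w₁,...,wₙ), V the Vandermonde matrix V_{ij} = λᵢ^{j−1}, and Q the orthogonal factor in the QR factorization of WV. Then the matrix J = Qᵀ Λ Q is tridiagonal. -/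
open Matrix

/-- Stieltjes construction: with `Λ = diag(λ)` having distinct entries, `w` a unit vector
with nonzero coordinates, `W = diag(w)`, `V` the Vandermonde matrix, and `W * V = Q * R`
the QR factorization, the matrix `J = Qᵀ Λ Q` is tridiagonal. -/
theorem stmt6 (n : ℕ) (lam : Fin n → ℝ) (hlam : Function.Injective lam)
    (w : Fin n → ℝ) (hw : ∀ i, w i ≠ 0) (hnorm : ∑ i, w i ^ 2 = 1)
    (Q R : Matrix (Fin n) (Fin n) ℝ) (hQ : IsOrth Q) (hR : IsUpperTriPos R)
    (hQR : Matrix.diagonal w * Matrix.of (fun i j : Fin n => lam i ^ (j : ℕ)) = Q * R) :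
    IsTridiag (Qᵀ * Matrix.diagonal lam * Q) := by
  classical
  set J := Qᵀ * Matrix.diagonal lam * Q with hJdef
  have hRbt : R.BlockTriangular id := fun i j h => hR.1 i j h
  have hdetR : IsUnit R.det := by
    rw [Matrix.det_of_upperTriangular hRbt]
    exact (Finset.prod_pos fun i _ => hR.2 i).ne'.isUnit
  have : Invertible R := R.invertibleOfIsUnitDet hdetR
  have hQQ : Q * Qᵀ = 1 := mul_eq_one_comm.mp hQ
  have hQJ : Q * J = Matrix.diagonal lam * Q := by
    have h : Q * J = (Q * Qᵀ) * Matrix.diagonal lam * Q := by simp [hJdef, Matrix.mul_assoc]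
    rw [h, hQQ, Matrix.one_mul]
  set H := R⁻¹ * J * R with hHdef
  have hJH : R * H * R⁻¹ = J := by
    simp only [hHdef, Matrix.mul_assoc]
    rw [Matrix.mul_nonsing_inv_cancel_left R _ hdetR, Matrix.mul_assoc,
      Matrix.mul_nonsing_inv R hdetR, Matrix.mul_one]
  have hM : Matrix.diagonal lam * (Q * R) = (Q * R) * H := by
    simp only [hHdef, Matrix.mul_assoc]
    rw [Matrix.mul_nonsing_inv_cancel_left R _ hdetR, ← Matrix.mul_assoc Q J R, hQJ,
      Matrix.mul_assoc]
  rw [← hQR] at hM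
  -- entrywise relation
  have hent : ∀ i j : Fin n,
      lam i ^ ((j : ℕ) + 1) = ∑ k : Fin n, lam i ^ (k : ℕ) * H k j := by
    intro i j
    have h1 := congrFun (congrFun hM i) j
    simp only [Matrix.mul_apply, Matrix.diagonal_apply, Matrix.of_apply, ite_mul, zero_mul,
      Finset.sum_ite_eq, Finset.mem_univ, if_true] at h1
    have h3 : w i * lam i ^ ((j:ℕ)+1) = w i * ∑ k : Fin n, lam i ^ (k : ℕ) * H k j := by
      rw [Finset.mul_sum]
      rw [show w i * lam i ^ ((j:ℕ)+1) = lam i * (w i * lam i ^ (j:ℕ)) by ring, h1]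
      exact Finset.sum_congr rfl fun k _ => by ring
    exact mul_left_cancel₀ (hw i) h3
  -- column structure of H
  have hcol : ∀ (j : Fin n) (hj : (j : ℕ) + 1 < n) (i : Fin n),
      i ≠ ⟨(j : ℕ) + 1, hj⟩ → H i j = 0 := by
    intro j hj i hi
    have hVinj : Function.Injective (Matrix.vandermonde lam).mulVec :=
      Matrix.mulVec_injective_iff_isUnit.2 ((Matrix.isUnit_iff_isUnit_det _).2
        (Matrix.det_vandermonde_ne_zero_iff.2 hlam).isUnit)
    have key : (Matrix.vandermonde lam) *ᵥ (fun k => H k j)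
        = (Matrix.vandermonde lam) *ᵥ (Pi.single (⟨(j : ℕ) + 1, hj⟩ : Fin n) 1) := by
      funext i'
      simp only [Matrix.mulVec, dotProduct, Matrix.vandermonde_apply]
      rw [← hent i' j]
      simp [Pi.single_apply, mul_ite, Finset.sum_ite_eq']
    have h := congrFun (hVinj key) i
    simpa [Pi.single_eq_of_ne hi] using h
  -- J is Hessenberg
  have hJhess : ∀ i j : Fin n, (j : ℕ) + 1 < (i : ℕ) → J i j = 0 := by
    intro i j hij
    have hRinv : R⁻¹.BlockTriangular id :=
      Matrix.blockTriangular_inv_of_blockTriangular hRbt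
    rw [← hJH, Matrix.mul_apply]
    apply Finset.sum_eq_zero
    intro m _
    by_cases hm : (j : ℕ) < (m : ℕ)
    · rw [hRinv (show (id j : Fin n) < id m from hm), mul_zero]
    · push_neg at hm
      rw [Matrix.mul_apply]
      rw [Finset.sum_eq_zero, zero_mul]
      intro k _
      by_cases hk : (k : ℕ) < (i : ℕ)
      · rw [hRbt (show (id k : Fin n) < id i from hk), zero_mul]
      · push_neg at hk
        have hmk : (m : ℕ) + 1 < (k : ℕ) :=
          lt_of_le_of_lt (by omega) (lt_of_lt_of_le hij hk)
        have hmn : (m : ℕ) + 1 < n := lt_trans hmk k.isLt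
        rw [hcol m hmn k (by intro hkeq; rw [hkeq] at hmk; simp at hmk), mul_zero]
  -- J is symmetric
  have hsym : ∀ i j : Fin n, J i j = J j i := by
    intro i j
    have h : Jᵀ = J := by
      rw [hJdef]
      simp [Matrix.transpose_mul, Matrix.mul_assoc]
    calc J i j = Jᵀ i j := (congrFun (congrFun h i) j).symm
      _ = J j i := Matrix.transpose_apply _ _ _
  intro i j hij
  rcases hij with h | h
  · rw [hsym i j]
    exact hJhess j i h
  · exact hJhess i j h
end

section
/- In the setting of the Stieltjes construction, with W = diag(w) positive diagonal, V Vandermonde on distinct λᵢ, and Q = Q(WV) the orthogonal QR factor of WV, the matrix J = Qᵀ Λ Q satisfies J_{j+1,j} = R_{j+1,j+1}/R_{j,j} > 0 for j = 1,...,n−1, where R = R(WV) is the upper triangular QR factor with positive diagonal. -/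
open Matrix

/-- The "error" polynomial `X^n - ∏ (X - λᵢ)` has degree `< n`. -/
lemma aux_natDegree_lt (n : ℕ) (hn : 0 < n) (lam : Fin n → ℝ) :
    (Polynomial.X ^ n - ∏ k, (Polynomial.X - Polynomial.C (lam k))).natDegree < n := by
  set q : Polynomial ℝ := ∏ k, (Polynomial.X - Polynomial.C (lam k)) with hq
  have hqm : q.Monic := Polynomial.monic_prod_of_monic _ _ fun k _ => Polynomial.monic_X_sub_C _
  have hqdeg : q.natDegree = n := by
    rw [hq, Polynomial.natDegree_prod]
    · simp
    · intro k _
      exact (Polynomial.X_sub_C_ne_zero _)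
  have hdeg : (Polynomial.X ^ n - q).degree < (n : WithBot ℕ) := by
    have := Polynomial.degree_sub_lt (p := (Polynomial.X : Polynomial ℝ) ^ n) (q := q)
      (by rw [Polynomial.degree_X_pow, Polynomial.degree_eq_natDegree hqm.ne_zero, hqdeg])
      (pow_ne_zero _ Polynomial.X_ne_zero)
      (by rw [Polynomial.leadingCoeff_X_pow, hqm.leadingCoeff])
    rwa [Polynomial.degree_X_pow] at this
  rcases eq_or_ne (Polynomial.X ^ n - q) 0 with h0 | h0
  · rw [h0]; simpa using hn
  · exact (Polynomial.natDegree_lt_iff_degree_lt h0).mpr hdeg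

lemma aux_eval (n : ℕ) (lam : Fin n → ℝ) (a : Fin n) :
    (Polynomial.X ^ n - ∏ k, (Polynomial.X - Polynomial.C (lam k))).eval (lam a)
      = lam a ^ n := by
  have : (∏ k, (Polynomial.X - Polynomial.C (lam k))).eval (lam a) = 0 := by
    rw [Polynomial.eval_prod]
    exact Finset.prod_eq_zero (Finset.mem_univ a) (by simp)
  simp [this]

/-- Stieltjes construction: with `W = diag(w)` positive diagonal, `V` Vandermonde on
distinct `λᵢ`, and `W * V = Q * R` the QR factorization with positive diagonal `R`, the
matrix `J = Qᵀ Λ Q` has `J (j+1) j = R (j+1) (j+1) / R j j > 0`. -/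
theorem stmt7 (n : ℕ) (lam : Fin n → ℝ) (hlam : Function.Injective lam)
    (w : Fin n → ℝ) (hw : ∀ i, 0 < w i)
    (Q R : Matrix (Fin n) (Fin n) ℝ) (hQ : IsOrth Q) (hR : IsUpperTriPos R)
    (hQR : Matrix.diagonal w * Matrix.of (fun i j : Fin n => lam i ^ (j : ℕ)) = Q * R) :
    ∀ i j : Fin n, (i : ℕ) = (j : ℕ) + 1 →
      (Qᵀ * Matrix.diagonal lam * Q) i j = R i i / R j j ∧
      0 < (Qᵀ * Matrix.diagonal lam * Q) i j := by
  intro i j hij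
  have hn : 0 < n := i.pos
  have hin : (j : ℕ) + 1 < n := hij ▸ i.isLt
  set p : Polynomial ℝ := Polynomial.X ^ n - ∏ k, (Polynomial.X - Polynomial.C (lam k))
    with hp
  set Cm : Matrix (Fin n) (Fin n) ℝ := Matrix.of fun k l =>
    (if (k : ℕ) = (l : ℕ) + 1 then (1 : ℝ) else 0) +
      (if (l : ℕ) + 1 = n then p.coeff k else 0) with hCm
  -- the companion identity  Λ (W V) = (W V) C
  have key : Matrix.diagonal lam * (Q * R) = Q * R * Cm := by
    rw [← hQR]
    ext a b
    rw [Matrix.diagonal_mul, Matrix.diagonal_mul, Matrix.mul_apply]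
    simp only [Matrix.diagonal_mul, Matrix.of_apply, hCm]
    rcases eq_or_lt_of_le (Nat.succ_le_of_lt b.isLt) with hb | hb
    · -- last column: use the polynomial identity
      have : ∀ k : Fin n, ((if (k : ℕ) = (b : ℕ) + 1 then (1 : ℝ) else 0) = 0) :=
        fun k => by rw [if_neg]; omega
      have hsum : ∑ k : Fin n, p.coeff k * lam a ^ (k : ℕ) = lam a ^ n := by
        have hd := aux_natDegree_lt n hn lam
        rw [← hp] at hd
        have := Polynomial.eval_eq_sum_range' hd (lam a)
        rw [aux_eval n lam a] at this
        rw [Fin.sum_univ_eq_sum_range (fun k => p.coeff k * lam a ^ k), ← this]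
      calc lam a * (w a * lam a ^ (b:ℕ))
            = w a * lam a ^ ((b:ℕ)+1) := by rw [pow_succ]; ring
          _ = w a * lam a ^ n := by rw [show (b:ℕ)+1 = n from hb]
          _ = ∑ k : Fin n, w a * lam a ^ (k:ℕ) *
                ((if (k : ℕ) = (b : ℕ) + 1 then (1 : ℝ) else 0) +
                  (if (b : ℕ) + 1 = n then p.coeff k else 0)) := by
              simp only [this, zero_add, if_pos hb]
              rw [← hsum, Finset.mul_sum]
              exact Finset.sum_congr rfl fun k _ => by ring
    · -- interior column: pure shift
      have hb1 : (b : ℕ) + 1 ≠ n := Nat.ne_of_lt hb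
      calc lam a * (w a * lam a ^ (b:ℕ))
            = w a * lam a ^ ((b:ℕ)+1) := by rw [pow_succ]; ring
          _ = ∑ k : Fin n, w a * lam a ^ (k:ℕ) *
                ((if (k : ℕ) = (b : ℕ) + 1 then (1 : ℝ) else 0) +
                  (if (b : ℕ) + 1 = n then p.coeff k else 0)) := by
              simp only [if_neg hb1, add_zero]
              rw [Finset.sum_eq_single (⟨(b:ℕ)+1, hb⟩ : Fin n)
                (fun c _ hc => by
                  rw [if_neg, mul_zero]
                  exact fun h => hc (Fin.ext h))
                (by simp)]
              simp
  -- invertibility of R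
  have hRtri : R.BlockTriangular id := fun a b h => hR.1 a b h
  have hdet : IsUnit R.det := by
    rw [Matrix.det_of_upperTriangular hRtri]
    exact (Finset.prod_pos fun k _ => hR.2 k).ne'.isUnit
  have : Invertible R := R.invertibleOfIsUnitDet hdet
  have hRR : R * R⁻¹ = 1 := Matrix.mul_nonsing_inv R hdet
  have hRinvtri : R⁻¹.BlockTriangular id :=
    Matrix.blockTriangular_inv_of_blockTriangular hRtri
  -- J = R C R⁻¹
  have hJ : Qᵀ * Matrix.diagonal lam * Q = R * Cm * R⁻¹ := by
    have h1 : Qᵀ * Matrix.diagonal lam * Q * R = R * Cm := by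
      calc Qᵀ * Matrix.diagonal lam * Q * R
          = Qᵀ * (Matrix.diagonal lam * (Q * R)) := by
            simp only [Matrix.mul_assoc]
        _ = Qᵀ * (Q * (R * Cm)) := by rw [key, Matrix.mul_assoc]
        _ = (Qᵀ * Q) * (R * Cm) := by rw [Matrix.mul_assoc]
        _ = R * Cm := by rw [hQ, one_mul]
    calc Qᵀ * Matrix.diagonal lam * Q
        = Qᵀ * Matrix.diagonal lam * Q * (R * R⁻¹) := by rw [hRR, mul_one]
      _ = (Qᵀ * Matrix.diagonal lam * Q * R) * R⁻¹ := by simp only [Matrix.mul_assoc]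
      _ = R * Cm * R⁻¹ := by rw [h1]
  -- (R * Cm) i l  for l ≤ j
  have hRC : ∀ l : Fin n, (hl : (l : ℕ) ≤ (j : ℕ)) →
      (R * Cm) i l = R i ⟨(l : ℕ) + 1, lt_of_le_of_lt (Nat.succ_le_succ hl) hin⟩ := by
    intro l hl
    have hl1 : (l : ℕ) + 1 ≠ n := by omega
    simp only [Matrix.mul_apply, hCm, Matrix.of_apply, if_neg hl1, add_zero]
    rw [Finset.sum_eq_single (⟨(l:ℕ)+1, lt_of_le_of_lt (Nat.succ_le_succ hl) hin⟩ : Fin n)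
      (fun c _ hc => by rw [if_neg, mul_zero]; exact fun h => hc (Fin.ext h))
      (by simp)]
    simp
  -- R⁻¹ j j = 1 / R j j
  have hRinvjj : R j j * R⁻¹ j j = 1 := by
    have := congrArg (fun M => M j j) hRR
    simp only [Matrix.mul_apply, Matrix.one_apply_eq] at this
    rw [Finset.sum_eq_single j
      (fun c _ hc => by
        rcases lt_or_gt_of_ne hc with h | h
        · rw [hR.1 j c h, zero_mul]
        · rw [hRinvtri h, mul_zero])
      (by simp)] at this
    exact this
  -- entry computation
  have hentry : (R * Cm * R⁻¹) i j = R i i * R⁻¹ j j := by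
    rw [Matrix.mul_apply]
    rw [Finset.sum_eq_single j
      (fun l _ hl => by
        rcases lt_or_gt_of_ne hl with h | h
        · have : (R * Cm) i l = R i ⟨(l:ℕ)+1, lt_of_le_of_lt (Nat.succ_le_succ h.le) hin⟩ :=
            hRC l h.le
          rw [this, hR.1, zero_mul]
          exact Fin.lt_def.mpr (by simp; omega)
        · rw [hRinvtri h, mul_zero])
      (by simp)]
    rw [hRC j le_rfl]
    congr 2
    exact Fin.ext (by simpa using hij.symm)
  have h2 : R⁻¹ j j = (R j j)⁻¹ := eq_inv_of_mul_eq_one_right hRinvjj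
  have hfin : (Qᵀ * Matrix.diagonal lam * Q) i j = R i i / R j j := by
    rw [hJ, hentry, h2, div_eq_mul_inv]
  exact ⟨hfin, hfin ▸ div_pos (hR.2 i) (hR.2 j)⟩
end

section
/- Let T be a real symmetric tridiagonal matrix with simple spectrum and T = Qᵀ Λ' Q a diagonalization with Q orthogonal and Λ' diagonal. Then there exist a permutation matrix P and a sign diagonal E such that E P⁻¹ Q is LU-positive; consequently every T in the isospectral manifold lies in some chart domain U_Λ^π. -/
open Matrix

/-- The permutation matrix of `π`, with `(i, j)` entry `1` iff `i = π j`. -/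
def permMat {n : ℕ} (π : Equiv.Perm (Fin n)) : Matrix (Fin n) (Fin n) ℝ :=
  Matrix.of fun i j => if i = π j then 1 else 0

/-!
Expanding the nonzero determinant of `Q` along its last column produces a nonzero cofactor,
i.e. a row whose deletion leaves a nonsingular matrix; moving that row to the bottom and
recursing orders the rows of `Q` so that every leading principal minor `δₖ` is nonzero.
Multiplying row `i` by `sign δᵢ · sign δᵢ₊₁` multiplies `δₖ` by the telescoping product
`sign δ₀ · sign δₖ = sign δₖ`, making it positive. Neither the row permutation nor the sign
changes affect `Qᵀ Λ' Q` once `Λ'` is permuted accordingly.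
-/

section LeadingMinor

variable {n : ℕ}

@[simp]
lemma leadingMinor_zero (M : Matrix (Fin n) (Fin n) ℝ) (h : 0 ≤ n) : leadingMinor M 0 h = 1 :=
  det_isEmpty

@[simp]
lemma leadingMinor_self (M : Matrix (Fin n) (Fin n) ℝ) : leadingMinor M n le_rfl = M.det := by
  simp only [leadingMinor, Fin.castLE_refl]
  rfl

lemma leadingMinor_of_le_castSucc (M : Matrix (Fin (n + 1)) (Fin (n + 1)) ℝ) {k : ℕ}
    (hk : k ≤ n) (h : k ≤ n + 1) :
    leadingMinor M k h = leadingMinor (M.submatrix Fin.castSucc Fin.castSucc) k hk := by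
  simp only [leadingMinor, submatrix_apply]
  rfl

lemma leadingMinor_diagonal_mul (ε : Fin n → ℝ) (M : Matrix (Fin n) (Fin n) ℝ) (k : ℕ)
    (h : k ≤ n) :
    leadingMinor (diagonal ε * M) k h =
      (∏ i : Fin k, ε (Fin.castLE h i)) * leadingMinor M k h := by
  have : (of fun i j : Fin k => (diagonal ε * M) (Fin.castLE h i) (Fin.castLE h j)) =
      diagonal (fun i : Fin k => ε (Fin.castLE h i)) *
        of fun i j : Fin k => M (Fin.castLE h i) (Fin.castLE h j) := by
    ext i j
    simp [diagonal_mul]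
  rw [leadingMinor, this, det_mul, det_diagonal, leadingMinor]

end LeadingMinor

/-- The permutation sending `castSucc i` to `r.succAbove (σ i)` and `last n` to `r`. -/
def succAboveLastPerm {n : ℕ} (r : Fin (n + 1)) (σ : Equiv.Perm (Fin n)) :
    Equiv.Perm (Fin (n + 1)) :=
  finSuccEquivLast.trans ((Equiv.optionCongr σ).trans (finSuccEquiv' r).symm)

@[simp]
lemma succAboveLastPerm_castSucc {n : ℕ} (r : Fin (n + 1)) (σ : Equiv.Perm (Fin n))
    (i : Fin n) : succAboveLastPerm r σ i.castSucc = r.succAbove (σ i) := by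
  simp [succAboveLastPerm]

lemma exists_perm_leadingMinor_ne_zero :
    ∀ {n : ℕ} (A : Matrix (Fin n) (Fin n) ℝ), A.det ≠ 0 →
      ∃ π : Equiv.Perm (Fin n), ∀ k (h : k ≤ n), leadingMinor (A.submatrix π id) k h ≠ 0
  | 0, _, _ => ⟨1, fun k h => by obtain rfl := Nat.le_zero.mp h; simp⟩
  | n + 1, A, hA => by
    obtain ⟨r, -, hr⟩ :=
      Finset.exists_ne_zero_of_sum_ne_zero (det_succ_column A (Fin.last n) ▸ hA)
    obtain ⟨σ, hσ⟩ := exists_perm_leadingMinor_ne_zero _ (right_ne_zero_of_mul hr)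
    refine ⟨succAboveLastPerm r σ, fun k h => ?_⟩
    rcases Nat.le_succ_iff.mp h with hk | rfl
    · rw [leadingMinor_of_le_castSucc _ hk]
      simpa [submatrix_submatrix, Function.comp_def] using hσ k hk
    · rw [leadingMinor_self, det_permute]
      exact mul_ne_zero (by simp) hA

lemma exists_sign_leadingMinor_pos {n : ℕ} (M : Matrix (Fin n) (Fin n) ℝ)
    (hM : ∀ k (h : k ≤ n), leadingMinor M k h ≠ 0) :
    ∃ ε : Fin n → ℝ, (∀ i, ε i = 1 ∨ ε i = -1) ∧
      ∀ k (h : k ≤ n), 0 < leadingMinor (diagonal ε * M) k h := by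
  set s : ∀ k, k ≤ n → ℝ := fun k h => SignType.sign (leadingMinor M k h)
  have hs : ∀ k h, s k h = 1 ∨ s k h = -1 := fun k h => by
    rcases (hM k h).lt_or_gt with hlt | hlt <;> simp [s, hlt]
  set ε : Fin n → ℝ := fun i => s i i.isLt.le * s (i + 1) i.isLt
  have hprod : ∀ k (h : k ≤ n), ∏ i : Fin k, ε (Fin.castLE h i) = s k h := by
    intro k
    induction k with
    | zero => intro h; simp [s]
    | succ k ih =>
      intro h
      have hk : k ≤ n := k.le_succ.trans h
      rw [Fin.prod_univ_castSucc,
        show ∏ i : Fin k, ε (Fin.castLE h i.castSucc) = s k hk from ih hk]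
      rcases hs k hk with h1 | h1 <;> simp [ε, h1]
  refine ⟨ε, fun i => ?_, fun k h => ?_⟩
  · rcases hs i i.isLt.le with h1 | h1 <;> rcases hs (i + 1) i.isLt with h2 | h2 <;>
      simp [ε, h1, h2]
  · rw [leadingMinor_diagonal_mul, hprod, sign_mul_self]
    exact abs_pos.mpr (hM k h)

lemma transpose_permMat_mul {n : ℕ} (π : Equiv.Perm (Fin n)) (N : Matrix (Fin n) (Fin n) ℝ) :
    (permMat π)ᵀ * N = N.submatrix π id := by
  ext i j
  simp [mul_apply, permMat]

lemma isSignDiag_diagonal {n : ℕ} {ε : Fin n → ℝ} (hε : ∀ i, ε i = 1 ∨ ε i = -1) :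
    IsSignDiag (diagonal ε) :=
  ⟨fun _ _ hij => diagonal_apply_ne ε hij, fun i => by simpa using hε i⟩

lemma transpose_mul_diagonal_mul_signed_submatrix {ι R : Type*} [Fintype ι] [DecidableEq ι]
    [CommRing R] (Q : Matrix ι ι R) (d ε : ι → R) (hε : ∀ i, ε i * ε i = 1)
    (π : Equiv.Perm ι) :
    (diagonal ε * Q.submatrix π id)ᵀ * diagonal (d ∘ π) * (diagonal ε * Q.submatrix π id) =
      Qᵀ * diagonal d * Q := by
  have hsign : diagonal ε * diagonal (d ∘ π) * diagonal ε = diagonal (d ∘ π) := by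
    simp only [diagonal_mul_diagonal]
    congr 1
    ext i
    simp only [Function.comp_apply]
    linear_combination (d (π i)) * hε i
  calc (diagonal ε * Q.submatrix π id)ᵀ * diagonal (d ∘ π) * (diagonal ε * Q.submatrix π id)
      = (Q.submatrix π id)ᵀ * (diagonal ε * diagonal (d ∘ π) * diagonal ε) *
          Q.submatrix π id := by
        simp only [transpose_mul, diagonal_transpose, Matrix.mul_assoc]
    _ = Qᵀ.submatrix id π * (diagonal d).submatrix π π * Q.submatrix π id := by
        rw [hsign, transpose_submatrix, submatrix_diagonal_equiv]
    _ = Qᵀ * diagonal d * Q := by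
        rw [submatrix_mul_equiv, submatrix_mul_equiv, submatrix_id_id]

lemma IsOrth.det_ne_zero {n : ℕ} {Q : Matrix (Fin n) (Fin n) ℝ} (hQ : IsOrth Q) :
    Q.det ≠ 0 := by
  have := congrArg det hQ
  rw [det_mul, det_transpose, det_one] at this
  exact left_ne_zero_of_mul_eq_one this

theorem stmt8_general (n : ℕ) (lam : Fin n → ℝ)
    (T Q : Matrix (Fin n) (Fin n) ℝ)
    (hQ : IsOrth Q)
    (hdiag : T = Qᵀ * Matrix.diagonal lam * Q) :
    ∃ (π : Equiv.Perm (Fin n)) (E : Matrix (Fin n) (Fin n) ℝ), IsSignDiag E ∧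
      LUPositive (E * (permMat π)ᵀ * Q) ∧
      T = (E * (permMat π)ᵀ * Q)ᵀ * Matrix.diagonal (fun i => lam (π i)) *
            (E * (permMat π)ᵀ * Q) := by
  obtain ⟨π, hπ⟩ := exists_perm_leadingMinor_ne_zero Q hQ.det_ne_zero
  obtain ⟨ε, hε, hpos⟩ := exists_sign_leadingMinor_pos _ hπ
  have hεε : ∀ i, ε i * ε i = 1 := fun i => by rcases hε i with h | h <;> simp [h]
  refine ⟨π, diagonal ε, isSignDiag_diagonal hε, ?_, ?_⟩ <;>
    rw [Matrix.mul_assoc (diagonal ε), transpose_permMat_mul]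
  · exact hpos
  · exact hdiag.trans (transpose_mul_diagonal_mul_signed_submatrix Q lam ε hεε π).symm

/-- Every symmetric tridiagonal `T` with simple spectrum lies in some chart domain: given
a diagonalization `T = Qᵀ Λ' Q`, there are a permutation `π` and a sign diagonal `E` with
`E (P_π)⁻¹ Q` LU-positive, giving a `π`-normalized diagonalization of `T`. -/
theorem stmt8 (n : ℕ) (lam : Fin n → ℝ) (hlam : Function.Injective lam)
    (T Q : Matrix (Fin n) (Fin n) ℝ)
    (hsym : Tᵀ = T) (htri : IsTridiag T) (hQ : IsOrth Q)
    (hdiag : T = Qᵀ * Matrix.diagonal lam * Q) :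
    ∃ (π : Equiv.Perm (Fin n)) (E : Matrix (Fin n) (Fin n) ℝ), IsSignDiag E ∧
      LUPositive (E * (permMat π)ᵀ * Q) ∧
      T = (E * (permMat π)ᵀ * Q)ᵀ * Matrix.diagonal (fun i => lam (π i)) *
            (E * (permMat π)ᵀ * Q) :=
  stmt8_general n lam T Q hQ hdiag
end

section
/- If T is in the chart domain U_Λ^π (i.e., T = Q_πᵀ Λ^π Q_π with Q_π orthogonal and LU-positive) and E is a sign diagonal matrix, then ETE is also in U_Λ^π; moreover the LU-positive orthogonal matrix diagonalizing ETE is E Q_π E. -/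
open Matrix

/-! A sign diagonal `E` is a symmetric orthogonal involution commuting with every diagonal
matrix. Conjugation by it multiplies each leading principal minor by a square of a product of
`±1`'s, i.e. by `1`, and `E (Qᵀ Λ Q) E = (E Q E)ᵀ (E Λ E) (E Q E) = (E Q E)ᵀ Λ (E Q E)`.
-/

theorem IsOrth.mul {n : ℕ} {A B : Matrix (Fin n) (Fin n) ℝ} (hA : IsOrth A) (hB : IsOrth B) :
    IsOrth (A * B) := by
  unfold IsOrth at *
  rw [transpose_mul, mul_assoc, ← mul_assoc Aᵀ, hA, one_mul, hB]

theorem leadingMinor_diagonal_mul_mul_diagonal {n : ℕ} (d e : Fin n → ℝ)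
    (M : Matrix (Fin n) (Fin n) ℝ) (k : ℕ) (h : k ≤ n) :
    leadingMinor (diagonal d * M * diagonal e) k h =
      (∏ i : Fin k, d (Fin.castLE h i)) * leadingMinor M k h *
        ∏ i : Fin k, e (Fin.castLE h i) := by
  have hsub : (of fun i j : Fin k =>
        (diagonal d * M * diagonal e) (Fin.castLE h i) (Fin.castLE h j)) =
      diagonal (fun i => d (Fin.castLE h i)) *
        (of fun i j : Fin k => M (Fin.castLE h i) (Fin.castLE h j)) *
        diagonal (fun i => e (Fin.castLE h i)) := by
    ext i j
    simp [mul_diagonal, diagonal_mul]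
  rw [leadingMinor, hsub, det_mul, det_mul, det_diagonal, det_diagonal, leadingMinor]

namespace IsSignDiag

variable {n : ℕ} {E : Matrix (Fin n) (Fin n) ℝ}

theorem eq_diagonal (hE : IsSignDiag E) : E = diagonal fun i => E i i := by
  ext i j
  by_cases h : i = j
  · subst h; simp
  · simp [h, hE.1 i j h]

theorem diag_mul_self (hE : IsSignDiag E) (i : Fin n) : E i i * E i i = 1 := by
  rcases hE.2 i with h | h <;> simp [h]

theorem mul_self (hE : IsSignDiag E) : E * E = 1 := by
  rw [hE.eq_diagonal, diagonal_mul_diagonal, ← diagonal_one]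
  exact congrArg diagonal (funext hE.diag_mul_self)

theorem mul_mul_cancel (hE : IsSignDiag E) (M : Matrix (Fin n) (Fin n) ℝ) : E * (E * M) = M := by
  rw [← mul_assoc, hE.mul_self, one_mul]

theorem transpose_eq (hE : IsSignDiag E) : Eᵀ = E := by
  rw [hE.eq_diagonal, diagonal_transpose]

theorem isOrth (hE : IsSignDiag E) : IsOrth E := by
  rw [IsOrth, hE.transpose_eq, hE.mul_self]

theorem mul_diagonal_mul (hE : IsSignDiag E) (l : Fin n → ℝ) :
    E * diagonal l * E = diagonal l := by
  rw [hE.eq_diagonal, diagonal_mul_diagonal, diagonal_mul_diagonal]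
  congr 1
  funext i
  rw [mul_right_comm, hE.diag_mul_self, one_mul]

theorem luPositive_mul_mul (hE : IsSignDiag E) {Q : Matrix (Fin n) (Fin n) ℝ}
    (hQ : LUPositive Q) :
    LUPositive (E * Q * E) := by
  intro k h
  rw [hE.eq_diagonal, leadingMinor_diagonal_mul_mul_diagonal, mul_right_comm,
    ← Finset.prod_mul_distrib]
  simpa [hE.diag_mul_self] using hQ k h

end IsSignDiag

theorem stmt9_general (n : ℕ) (lam : Fin n → ℝ)
    (π : Equiv.Perm (Fin n)) (T Qπ E : Matrix (Fin n) (Fin n) ℝ)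
    (hQ : IsOrth Qπ) (hLU : LUPositive Qπ)
    (hT : T = Qπᵀ * Matrix.diagonal (fun i => lam (π i)) * Qπ)
    (hE : IsSignDiag E) :
    IsOrth (E * Qπ * E) ∧ LUPositive (E * Qπ * E) ∧
      E * T * E = (E * Qπ * E)ᵀ * Matrix.diagonal (fun i => lam (π i)) * (E * Qπ * E) := by
  refine ⟨(hE.isOrth.mul hQ).mul hE.isOrth, hE.luPositive_mul_mul hLU, ?_⟩
  conv_rhs => rw [← hE.mul_diagonal_mul]
  simp only [hT, transpose_mul, hE.transpose_eq, mul_assoc, hE.mul_mul_cancel]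

/-- If `T ∈ U_Λ^π`, i.e. `T = Q_πᵀ Λ^π Q_π` with `Q_π` orthogonal LU-positive, and `E` is
a sign diagonal, then `E T E ∈ U_Λ^π`, diagonalized by the LU-positive orthogonal matrix
`E Q_π E`. -/
theorem stmt9 (n : ℕ) (lam : Fin n → ℝ) (hlam : Function.Injective lam)
    (π : Equiv.Perm (Fin n)) (T Qπ E : Matrix (Fin n) (Fin n) ℝ)
    (hQ : IsOrth Qπ) (hLU : LUPositive Qπ)
    (hT : T = Qπᵀ * Matrix.diagonal (fun i => lam (π i)) * Qπ)
    (hE : IsSignDiag E) :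
    IsOrth (E * Qπ * E) ∧ LUPositive (E * Qπ * E) ∧
      E * T * E = (E * Qπ * E)ᵀ * Matrix.diagonal (fun i => lam (π i)) * (E * Qπ * E) :=
  stmt9_general n lam π T Qπ E hQ hLU hT hE
end

section
/- If T is an unreduced real symmetric tridiagonal matrix (all subdiagonal entries nonzero) conjugate to a diagonal matrix Λ with distinct entries, then for every permutation π, T admits a π-normalized diagonalization T = Q_πᵀ Λ^π Q_π with Q_π orthogonal and LU-positive. -/
open Matrix

lemma eig_zero_of_first {n : ℕ} (T : Matrix (Fin n) (Fin n) ℝ)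
    (htri : IsTridiag T) (hsup : ∀ i j : Fin n, (j : ℕ) = (i : ℕ) + 1 → T i j ≠ 0)
    {μ : ℝ} {u : Fin n → ℝ} (heig : T *ᵥ u = μ • u)
    (h0 : ∀ h : 0 < n, u ⟨0, h⟩ = 0) : u = 0 := by
  have key : ∀ m : ℕ, ∀ h : m < n, u ⟨m, h⟩ = 0 := by
    intro m
    induction m using Nat.strong_induction_on with
    | _ m ih =>
      intro h
      match m, ih with
      | 0, _ => exact h0 h
      | (m+1), ih =>
        have hm : m < n := Nat.lt_of_succ_lt h
        have heq : (T *ᵥ u) ⟨m, hm⟩ = μ * u ⟨m, hm⟩ := by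
          rw [heig]; rfl
        have hsum : (T *ᵥ u) ⟨m, hm⟩ = ∑ l : Fin n, T ⟨m, hm⟩ l * u l := rfl
        have hsingle : ∑ l : Fin n, T ⟨m, hm⟩ l * u l
            = T ⟨m, hm⟩ ⟨m+1, h⟩ * u ⟨m+1, h⟩ := by
          apply Finset.sum_eq_single
          · intro l _ hl
            rcases lt_or_gt_of_ne (fun hv : (l : ℕ) = m + 1 => hl (Fin.ext hv)) with hv | hv
            · have : u l = 0 := by
                have := ih l.1 hv l.2
                simpa using this
              simp [this]
            · have : T ⟨m, hm⟩ l = 0 := htri _ _ (Or.inl hv)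
              simp [this]
          · intro hmem; exact absurd (Finset.mem_univ _) hmem
        have hTz : T ⟨m, hm⟩ ⟨m+1, h⟩ ≠ 0 := hsup _ _ rfl
        have hu : u ⟨m, hm⟩ = 0 := ih m (Nat.lt_succ_self m) hm
        have : T ⟨m, hm⟩ ⟨m+1, h⟩ * u ⟨m+1, h⟩ = 0 := by
          rw [← hsingle, ← hsum, heq, hu, mul_zero]
        exact (mul_eq_zero.mp this).resolve_left hTz
  funext i
  have := key i.1 i.2
  simpa using this


lemma listprod_shift {n : ℕ} (T : Matrix (Fin n) (Fin n) ℝ) (htri : IsTridiag T)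
    (cs : List ℝ) {m : ℕ} {w : Fin n → ℝ} (hw : ∀ j : Fin n, (j : ℕ) < m → w j = 0) :
    ∀ j : Fin n, (j : ℕ) + cs.length < m →
      ((cs.map (fun c => T - c • (1 : Matrix (Fin n) (Fin n) ℝ))).prod *ᵥ w) j = 0 := by
  induction cs generalizing w with
  | nil =>
    intro j hj
    simpa using hw j (by simpa using hj)
  | cons c cs ih =>
    intro j hj
    simp only [List.length_cons] at hj
    have hprod : ((c :: cs).map (fun c => T - c • (1 : Matrix (Fin n) (Fin n) ℝ))).prod
        = (T - c • 1) * (cs.map (fun c => T - c • (1 : Matrix (Fin n) (Fin n) ℝ))).prod := by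
      simp [List.prod_cons]
    set u := (cs.map (fun c => T - c • (1 : Matrix (Fin n) (Fin n) ℝ))).prod *ᵥ w with hu
    have hu0 : ∀ l : Fin n, (l : ℕ) + cs.length < m → u l = 0 := ih hw
    have : ((c :: cs).map (fun c => T - c • (1 : Matrix (Fin n) (Fin n) ℝ))).prod *ᵥ w
        = (T - c • 1) *ᵥ u := by rw [hprod, ← mulVec_mulVec]
    rw [this, sub_mulVec]
    have h1 : (T *ᵥ u) j = 0 := by
      show ∑ l : Fin n, T j l * u l = 0
      apply Finset.sum_eq_zero
      intro l _
      rcases le_or_gt (l : ℕ) ((j : ℕ) + 1) with hl | hl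
      · have : u l = 0 := hu0 l (by
          have : (l : ℕ) + cs.length ≤ (j : ℕ) + 1 + cs.length := by omega
          omega)
        simp [this]
      · simp [htri j l (Or.inl hl)]
    have h2 : ((c • (1 : Matrix (Fin n) (Fin n) ℝ)) *ᵥ u) j = c * u j := by
      simp [smul_mulVec]
    have h3 : u j = 0 := hu0 j (by omega)
    simp [h1, h2, h3]

lemma listprod_eig {n : ℕ} (T : Matrix (Fin n) (Fin n) ℝ)
    {μ : ℝ} {v : Fin n → ℝ} (hv : T *ᵥ v = μ • v) (cs : List ℝ) :
    (cs.map (fun c => T - c • (1 : Matrix (Fin n) (Fin n) ℝ))).prod *ᵥ v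
      = (cs.map (fun c => μ - c)).prod • v := by
  induction cs with
  | nil => simp
  | cons c cs ih =>
    have : ((c :: cs).map (fun c => T - c • (1 : Matrix (Fin n) (Fin n) ℝ))).prod *ᵥ v
        = (T - c • 1) *ᵥ ((cs.map (fun c => T - c • (1 : Matrix (Fin n) (Fin n) ℝ))).prod *ᵥ v) := by
      rw [List.map_cons, List.prod_cons, ← mulVec_mulVec]
    rw [this, ih, mulVec_smul, sub_mulVec, hv, smul_mulVec, one_mulVec,
      List.map_cons, List.prod_cons]
    module


lemma minor_ne_zero {n : ℕ} (T Qp : Matrix (Fin n) (Fin n) ℝ)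
    (htri : IsTridiag T) (hsup : ∀ i j : Fin n, (j : ℕ) = (i : ℕ) + 1 → T i j ≠ 0)
    (μ : Fin n → ℝ) (hμ : Function.Injective μ)
    (horth : Qp * Qpᵀ = 1)
    (heig : ∀ m : Fin n, T *ᵥ (fun j => Qp m j) = μ m • (fun j => Qp m j))
    (k : ℕ) (hk : k ≤ n) : leadingMinor Qp k hk ≠ 0 := by
  rcases Nat.eq_zero_or_pos k with hk0 | hkpos
  · subst hk0
    simp [leadingMinor, Matrix.det_isEmpty]
  intro hdet
  set M : Matrix (Fin k) (Fin k) ℝ :=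
    Matrix.of fun i j : Fin k => Qp (Fin.castLE hk i) (Fin.castLE hk j) with hM
  obtain ⟨c, hc0, hcv⟩ : ∃ c, c ≠ 0 ∧ c ᵥ* M = 0 := by
    obtain ⟨c, h1, h2⟩ := (Matrix.exists_vecMul_eq_zero_iff (M := M)).mpr hdet
    exact ⟨c, h1, h2⟩
  set w : Fin n → ℝ := fun j => ∑ i : Fin k, c i * Qp (Fin.castLE hk i) j with hwdef
  have hw : ∀ j : Fin n, (j : ℕ) < k → w j = 0 := by
    intro j hj
    have := congrFun hcv ⟨j.1, hj⟩
    simp only [Matrix.vecMul, dotProduct, Pi.zero_apply] at this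
    have hcast : Fin.castLE hk ⟨j.1, hj⟩ = j := by apply Fin.ext; rfl
    simpa [hM, hwdef, hcast] using this
  apply hc0
  funext i₀
  show c i₀ = 0
  set cs : List ℝ :=
    ((Finset.univ.erase i₀).toList).map (fun i : Fin k => μ (Fin.castLE hk i)) with hcs
  have hlen : cs.length = k - 1 := by
    simp [hcs, Finset.card_erase_of_mem]
  set P : Matrix (Fin n) (Fin n) ℝ :=
    (cs.map (fun c => T - c • (1 : Matrix (Fin n) (Fin n) ℝ))).prod with hP
  have hkn : 0 < n := lt_of_lt_of_le hkpos hk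
  set j₀ : Fin n := ⟨0, hkn⟩ with hj₀
  have hz : (P *ᵥ w) j₀ = 0 := by
    apply listprod_shift T htri cs hw
    show 0 + cs.length < k
    rw [hlen]
    omega
  have hw' : w = ∑ i : Fin k, c i • (fun j => Qp (Fin.castLE hk i) j) := by
    funext j
    simp [hwdef, Finset.sum_apply]
  have hrows : ∀ i : Fin k, i ≠ i₀ → P *ᵥ (fun j => Qp (Fin.castLE hk i) j) = 0 := by
    intro i hi
    rw [hP, listprod_eig T (heig (Fin.castLE hk i)) cs]
    have hmem : μ (Fin.castLE hk i) ∈ cs := by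
      simp only [hcs, List.mem_map]
      exact ⟨i, by simp [Finset.mem_erase, hi], rfl⟩
    have : (cs.map (fun x => μ (Fin.castLE hk i) - x)).prod = 0 := by
      apply List.prod_eq_zero
      exact List.mem_map.mpr ⟨μ (Fin.castLE hk i), hmem, sub_self _⟩
    rw [this, zero_smul]
  set s : ℝ := (cs.map (fun x => μ (Fin.castLE hk i₀) - x)).prod with hs
  have hsne : s ≠ 0 := by
    intro hzero
    have hx := List.prod_eq_zero_iff.mp hzero
    rw [List.mem_map] at hx
    obtain ⟨y, hy, hxy⟩ := hx
    rw [hcs, List.mem_map] at hy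
    obtain ⟨i, hi, hyi⟩ := hy
    rw [Finset.mem_toList, Finset.mem_erase] at hi
    subst hyi
    apply hi.1
    exact Fin.castLE_injective hk (hμ (by linarith [sub_eq_zero.mp hxy]))
  have hdistr : P *ᵥ w = ∑ i : Fin k, c i • (P *ᵥ (fun j => Qp (Fin.castLE hk i) j)) := by
    rw [hw']
    rw [show ∀ v : Fin n → ℝ, P *ᵥ v = P.mulVecLin v from fun _ => rfl]
    rw [map_sum]
    simp [Matrix.mulVecLin_apply]
  have hsum : (P *ᵥ w) j₀ = c i₀ * (s * Qp (Fin.castLE hk i₀) j₀) := by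
    rw [hdistr]
    rw [Finset.sum_apply]
    rw [Finset.sum_eq_single i₀]
    · rw [hP, listprod_eig T (heig (Fin.castLE hk i₀)) cs]
      simp [hs, mul_assoc]
    · intro i _ hi
      rw [hrows i hi]
      simp
    · intro h
      exact absurd (Finset.mem_univ _) h
  have hq0 : Qp (Fin.castLE hk i₀) j₀ ≠ 0 := by
    intro h0
    have hrow0 : (fun j => Qp (Fin.castLE hk i₀) j) = 0 := by
      apply eig_zero_of_first T htri hsup (heig (Fin.castLE hk i₀))
      intro h
      simpa [hj₀] using h0
    have h1 : (Qp * Qpᵀ) (Fin.castLE hk i₀) (Fin.castLE hk i₀) = 1 := by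
      rw [horth]; simp
    rw [Matrix.mul_apply] at h1
    have : ∀ l : Fin n, Qp (Fin.castLE hk i₀) l * Qpᵀ l (Fin.castLE hk i₀) = 0 := by
      intro l
      have := congrFun hrow0 l
      simp only [Pi.zero_apply] at this
      simp [this, Matrix.transpose_apply]
    rw [Finset.sum_congr rfl (fun l _ => this l)] at h1
    simp at h1
  have := hz
  rw [hsum] at this
  rcases mul_eq_zero.mp this with h | h
  · exact h
  · exact absurd h (mul_ne_zero hsne hq0)

lemma sign_telescope (s : ℕ → ℝ) (hs : ∀ m, s m * s m = 1) (k : ℕ) :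
    (∏ i ∈ Finset.range k, (s (i + 1) * s i)) = s k * s 0 := by
  induction k with
  | zero => simp [hs 0]
  | succ k ih =>
    rw [Finset.prod_range_succ, ih]
    calc s k * s 0 * (s (k + 1) * s k) = s (k + 1) * s 0 * (s k * s k) := by ring
    _ = s (k + 1) * s 0 := by rw [hs k, mul_one]

/-- An unreduced symmetric tridiagonal matrix conjugate to `Λ = diag(λ₁ < … < λₙ)`
admits, for every permutation `π`, a `π`-normalized diagonalization
`T = Q_πᵀ Λ^π Q_π` with `Q_π` orthogonal and LU-positive. -/
theorem stmt10 (n : ℕ) (lam : Fin n → ℝ) (hlam : StrictMono lam)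
    (T : Matrix (Fin n) (Fin n) ℝ)
    (hsym : Tᵀ = T) (htri : IsTridiag T)
    (hunred : ∀ i j : Fin n, (i : ℕ) = (j : ℕ) + 1 → T i j ≠ 0)
    (hconj : ∃ Q : Matrix (Fin n) (Fin n) ℝ, IsOrth Q ∧ T = Qᵀ * Matrix.diagonal lam * Q)
    (π : Equiv.Perm (Fin n)) :
    ∃ Qπ : Matrix (Fin n) (Fin n) ℝ, IsOrth Qπ ∧ LUPositive Qπ ∧
      T = Qπᵀ * Matrix.diagonal (fun i => lam (π i)) * Qπ := by
  obtain ⟨Q, hQorth, hQconj⟩ := hconj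
  have hTs : ∀ a b : Fin n, T a b = T b a := fun a b => congrFun (congrFun hsym b) a
  have hsup : ∀ i j : Fin n, (j : ℕ) = (i : ℕ) + 1 → T i j ≠ 0 := by
    intro i j hij
    rw [hTs i j]
    exact hunred j i hij
  set Qp : Matrix (Fin n) (Fin n) ℝ := Q.submatrix (⇑π) id with hQp
  have htr : Qpᵀ = Qᵀ.submatrix id (⇑π) := by
    simp [hQp, Matrix.transpose_submatrix]
  have hdiag : Matrix.diagonal (fun i => lam (π i))
      = (Matrix.diagonal lam).submatrix (⇑π) (⇑π) := by
    ext i j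
    by_cases h : i = j
    · subst h; simp
    · simp [Matrix.diagonal_apply, h, π.injective.ne h]
  have hQporth : Qpᵀ * Qp = 1 := by
    rw [htr, hQp, Matrix.submatrix_mul_equiv Qᵀ Q id π id, hQorth, Matrix.submatrix_id_id]
  have hQpconj : T = Qpᵀ * Matrix.diagonal (fun i => lam (π i)) * Qp := by
    rw [htr, hdiag, hQp]
    simp only [Matrix.submatrix_mul_equiv, Matrix.submatrix_id_id]
    exact hQconj
  have horth2 : Qp * Qpᵀ = 1 := mul_eq_one_comm.mp hQporth
  have hQT : Qp * T = Matrix.diagonal (fun i => lam (π i)) * Qp := by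
    rw [hQpconj]
    simp only [← Matrix.mul_assoc]
    rw [horth2, Matrix.one_mul]
  have heig : ∀ m : Fin n, T *ᵥ (fun j => Qp m j)
      = lam (π m) • (fun j => Qp m j) := by
    intro m
    funext j
    have h1 : (Qp * T) m j = lam (π m) * Qp m j := by
      rw [hQT, Matrix.diagonal_mul]
    have h2 : (T *ᵥ fun l => Qp m l) j = (Qp * T) m j := by
      rw [Matrix.mul_apply]
      simp only [Matrix.mulVec, dotProduct]
      exact Finset.sum_congr rfl fun l _ => by rw [hTs j l, mul_comm]
    rw [h2, h1]
    simp
  have hinj : Function.Injective fun m : Fin n => lam (π m) :=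
    hlam.injective.comp π.injective
  have hminor : ∀ k (h : k ≤ n), leadingMinor Qp k h ≠ 0 := by
    intro k h
    exact minor_ne_zero T Qp htri hsup (fun m => lam (π m)) hinj horth2 heig k h
  -- sign fixing
  set Δ : ℕ → ℝ := fun k => if h : k ≤ n then leadingMinor Qp k h else 1 with hΔdef
  have hΔne : ∀ k, Δ k ≠ 0 := by
    intro k
    by_cases h : k ≤ n
    · simpa [hΔdef, h] using hminor k h
    · simp [hΔdef, h]
  set s : ℕ → ℝ := fun k => if 0 < Δ k then 1 else -1 with hsdef
  have hss : ∀ m, s m * s m = 1 := by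
    intro m
    by_cases h : 0 < Δ m <;> simp [hsdef, h]
  have hsΔ : ∀ k, k ≤ n → 0 < s k * Δ k := by
    intro k hkn
    by_cases h : 0 < Δ k
    · simpa [hsdef, h] using h
    · have hlt : Δ k < 0 := lt_of_le_of_ne (not_lt.mp h) (hΔne k)
      simp only [hsdef, if_neg h]
      nlinarith
  have hs0 : s 0 = 1 := by
    have h0 : Δ 0 = 1 := by
      simp [hΔdef, Nat.zero_le, leadingMinor, Matrix.det_isEmpty]
    simp [hsdef, h0]
  set ε : Fin n → ℝ := fun i => s ((i : ℕ) + 1) * s (i : ℕ) with hεdef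
  have hεsq : ∀ i, ε i * ε i = 1 := by
    intro i
    calc ε i * ε i = (s ((i : ℕ) + 1) * s ((i : ℕ) + 1)) * (s (i : ℕ) * s (i : ℕ)) := by
          simp only [hεdef]; ring
    _ = 1 := by rw [hss, hss, mul_one]
  set E : Matrix (Fin n) (Fin n) ℝ := Matrix.diagonal ε with hE
  have hEE : Matrix.diagonal ε * Matrix.diagonal ε = 1 := by
    rw [Matrix.diagonal_mul_diagonal]
    have : (fun i => ε i * ε i) = fun _ : Fin n => (1 : ℝ) := funext hεsq
    rw [this, Matrix.diagonal_one]
  refine ⟨E * Qp, ?_, ?_, ?_⟩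
  · show (E * Qp)ᵀ * (E * Qp) = 1
    rw [Matrix.transpose_mul, hE, Matrix.diagonal_transpose]
    calc Qpᵀ * Matrix.diagonal ε * (Matrix.diagonal ε * Qp)
        = Qpᵀ * (Matrix.diagonal ε * Matrix.diagonal ε) * Qp := by
          simp only [Matrix.mul_assoc]
    _ = Qpᵀ * Qp := by rw [hEE, Matrix.mul_one]
    _ = 1 := hQporth
  · intro k h
    have hblock : (Matrix.of fun i j : Fin k => (E * Qp) (Fin.castLE h i) (Fin.castLE h j))
        = Matrix.diagonal (fun i : Fin k => ε (Fin.castLE h i)) *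
          (Matrix.of fun i j : Fin k => Qp (Fin.castLE h i) (Fin.castLE h j)) := by
      ext i j
      simp [hE, Matrix.diagonal_mul]
    have hdet : leadingMinor (E * Qp) k h
        = (∏ i : Fin k, ε (Fin.castLE h i)) * leadingMinor Qp k h := by
      rw [leadingMinor, hblock, Matrix.det_mul, Matrix.det_diagonal]
      rfl
    have hprod : (∏ i : Fin k, ε (Fin.castLE h i)) = s k := by
      have h1 : (∏ i : Fin k, ε (Fin.castLE h i))
          = ∏ i : Fin k, (fun m : ℕ => s (m + 1) * s m) (i : ℕ) := by
        apply Finset.prod_congr rfl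
        intro i _
        rfl
      rw [h1, Fin.prod_univ_eq_prod_range (fun m : ℕ => s (m + 1) * s m) k,
        sign_telescope s hss k, hs0, mul_one]
    have hΔk : leadingMinor Qp k h = Δ k := by simp [hΔdef, h]
    rw [hdet, hprod, hΔk]
    exact hsΔ k h
  · have hEDE : Matrix.diagonal ε * Matrix.diagonal (fun i => lam (π i)) * Matrix.diagonal ε
        = Matrix.diagonal (fun i => lam (π i)) := by
      rw [Matrix.diagonal_mul_diagonal, Matrix.diagonal_mul_diagonal]
      have hfun : (fun i => ε i * lam (π i) * ε i) = fun i => lam (π i) := by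
        funext i
        calc ε i * lam (π i) * ε i = lam (π i) * (ε i * ε i) := by ring
        _ = lam (π i) := by rw [hεsq i, mul_one]
      rw [hfun]
    have hstep : Matrix.diagonal ε * (Matrix.diagonal (fun i => lam (π i))
        * (Matrix.diagonal ε * Qp)) = Matrix.diagonal (fun i => lam (π i)) * Qp := by
      rw [← Matrix.mul_assoc, ← Matrix.mul_assoc, hEDE]
    calc T = Qpᵀ * Matrix.diagonal (fun i => lam (π i)) * Qp := hQpconj
    _ = (E * Qp)ᵀ * Matrix.diagonal (fun i => lam (π i)) * (E * Qp) := by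
        rw [Matrix.transpose_mul, hE, Matrix.diagonal_transpose]
        simp only [Matrix.mul_assoc]
        rw [hstep]
end

section
/- Let L_π be lower unipotent and Q_π = Q(L_π) the orthogonal QR factor of L_π, and suppose L_π⁻¹ Λ^π L_π = B_π is lower bidiagonal with diagonal Λ^π. Then T = Q_πᵀ Λ^π Q_π is symmetric and tridiagonal (upper Hessenberg and symmetric). -/
open Matrix

/-- If `L` is lower unipotent with QR factorization `L = Q * R`, and
`L⁻¹ Λ^π L = B` is lower bidiagonal with diagonal equal to that of `Λ^π`
(stated as `L * B = Λ^π * L`), then `T = Qᵀ Λ^π Q` is symmetric and tridiagonal. -/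
theorem stmt11 (n : ℕ) (d : Fin n → ℝ) (hd : Function.Injective d)
    (L B Q R : Matrix (Fin n) (Fin n) ℝ)
    (hL : IsUnipLower L)
    (hBlow : ∀ i j : Fin n, (i : ℕ) ≠ (j : ℕ) → (i : ℕ) ≠ (j : ℕ) + 1 → B i j = 0)
    (hBdiag : ∀ i : Fin n, B i i = d i)
    (hLB : L * B = Matrix.diagonal d * L)
    (hQR : L = Q * R) (hQ : IsOrth Q) (hR : IsUpperTriPos R) :
    (Qᵀ * Matrix.diagonal d * Q)ᵀ = Qᵀ * Matrix.diagonal d * Q ∧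
      IsTridiag (Qᵀ * Matrix.diagonal d * Q) := by
  -- R is upper triangular (as BlockTriangular id) with positive diagonal
  have hRtri : R.BlockTriangular id := fun i j hij => hR.1 i j hij
  have hdet : IsUnit R.det := by
    rw [Matrix.det_of_upperTriangular hRtri]
    exact (isUnit_iff_ne_zero).mpr (Finset.prod_pos (fun i _ => hR.2 i)).ne'
  have hInv : Invertible R := R.invertibleOfIsUnitDet hdet
  have hRinvTri : R⁻¹.BlockTriangular id :=
    Matrix.blockTriangular_inv_of_blockTriangular hRtri
  have hRR : R * R⁻¹ = 1 := Matrix.mul_inv_of_invertible R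
  -- Key identity: Qᵀ Λ Q = R B R⁻¹
  have key : Qᵀ * Matrix.diagonal d * Q = R * B * R⁻¹ := by
    have h1 : Q * R * B = Matrix.diagonal d * (Q * R) := by rw [← hQR]; exact hLB
    have h2 : Q * (R * B * R⁻¹) = Matrix.diagonal d * Q := by
      calc Q * (R * B * R⁻¹) = (Q * R * B) * R⁻¹ := by
            simp only [← Matrix.mul_assoc]
        _ = Matrix.diagonal d * (Q * R) * R⁻¹ := by rw [h1]
        _ = Matrix.diagonal d * Q * (R * R⁻¹) := by
            rw [Matrix.mul_assoc, Matrix.mul_assoc, Matrix.mul_assoc]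
        _ = Matrix.diagonal d * Q := by rw [hRR, Matrix.mul_one]
    calc Qᵀ * Matrix.diagonal d * Q = Qᵀ * (Matrix.diagonal d * Q) := by
          rw [Matrix.mul_assoc]
      _ = Qᵀ * (Q * (R * B * R⁻¹)) := by rw [h2]
      _ = (Qᵀ * Q) * (R * B * R⁻¹) := by simp only [← Matrix.mul_assoc]
      _ = R * B * R⁻¹ := by rw [hQ, Matrix.one_mul]
  -- symmetry
  have hsym : (Qᵀ * Matrix.diagonal d * Q)ᵀ = Qᵀ * Matrix.diagonal d * Q := by
    rw [Matrix.transpose_mul, Matrix.transpose_mul, Matrix.diagonal_transpose,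
      Matrix.transpose_transpose, Matrix.mul_assoc]
  refine ⟨hsym, ?_⟩
  -- R B R⁻¹ is upper Hessenberg
  have hhess : ∀ i j : Fin n, (j : ℕ) + 1 < (i : ℕ) → (R * B * R⁻¹) i j = 0 := by
    intro i j hij
    rw [Matrix.mul_apply]
    apply Finset.sum_eq_zero
    intro l _
    by_cases hl : (j : ℕ) < (l : ℕ)
    · have hz : R⁻¹ l j = 0 := hRinvTri (show (id j : Fin n) < id l from hl)
      rw [hz, mul_zero]
    · have hRB : (R * B) i l = 0 := by
        rw [Matrix.mul_apply]
        apply Finset.sum_eq_zero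
        intro k _
        by_cases hk : (k : ℕ) < (i : ℕ)
        · rw [hR.1 i k hk, zero_mul]
        · rw [hBlow k l (by omega) (by omega), mul_zero]
      rw [hRB, zero_mul]
  intro i j hij
  rcases hij with h | h
  · have hts := congrFun (congrFun hsym j) i
    rw [Matrix.transpose_apply] at hts
    rw [hts, key]
    exact hhess j i h
  · rw [key]
    exact hhess i j h
end

section
/- Given a π-normalized diagonalization T = Q_πᵀ Λ^π Q_π with Q_π = L_π U_π the LU factorization (L_π lower unipotent, U_π upper triangular with positive diagonal), the matrix B_π = U_π T U_π⁻¹ = L_π⁻¹ Λ^π L_π is lower bidiagonal with diagonal entries λ_{π(1)},...,λ_{π(n)}. -/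
open Matrix

/-- Given a `π`-normalized diagonalization `T = Q_πᵀ Λ^π Q_π` with LU factorization
`Q_π = L * U`, the matrix `B = U * T * U⁻¹ = L⁻¹ Λ^π L` is lower bidiagonal with
diagonal entries those of `Λ^π`. -/
theorem stmt12 (n : ℕ) (d : Fin n → ℝ) (hd : Function.Injective d)
    (T Q L U : Matrix (Fin n) (Fin n) ℝ)
    (hsym : Tᵀ = T) (htri : IsTridiag T)
    (hQ : IsOrth Q) (hLUpos : LUPositive Q)
    (hT : T = Qᵀ * Matrix.diagonal d * Q)
    (hQLU : Q = L * U) (hL : IsUnipLower L) (hU : IsUpperTriPos U) :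
    U * T * U⁻¹ = L⁻¹ * Matrix.diagonal d * L ∧
      (∀ i j : Fin n, (i : ℕ) ≠ (j : ℕ) → (i : ℕ) ≠ (j : ℕ) + 1 → (U * T * U⁻¹) i j = 0) ∧
      (∀ i : Fin n, (U * T * U⁻¹) i i = d i) := by
  -- triangularity in BlockTriangular form
  have hUtri : U.BlockTriangular id := fun i j h => hU.1 i j h
  have hLtri : L.BlockTriangular OrderDual.toDual := fun i j h => hL.1 i j (by exact h)
  have hUdet : U.det ≠ 0 := by
    rw [Matrix.det_of_upperTriangular hUtri]
    exact (Finset.prod_pos fun i _ => hU.2 i).ne'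
  have hLdet : L.det ≠ 0 := by
    rw [Matrix.det_of_lowerTriangular L hLtri]
    simp [hL.2]
  haveI : Invertible U := U.invertibleOfIsUnitDet hUdet.isUnit
  haveI : Invertible L := L.invertibleOfIsUnitDet hLdet.isUnit
  have hUinv : (U⁻¹).BlockTriangular id :=
    Matrix.blockTriangular_inv_of_blockTriangular hUtri
  have hLinv : (L⁻¹).BlockTriangular OrderDual.toDual :=
    Matrix.blockTriangular_inv_of_blockTriangular hLtri
  -- the key algebraic identity
  have hQinv : Q⁻¹ = Qᵀ := Matrix.inv_eq_left_inv hQ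
  have key : U * T * U⁻¹ = L⁻¹ * Matrix.diagonal d * L := by
    have hQT : Qᵀ = U⁻¹ * L⁻¹ := by rw [← hQinv, hQLU, Matrix.mul_inv_rev]
    rw [hT, hQT, hQLU]
    simp only [Matrix.mul_assoc]
    rw [Matrix.mul_nonsing_inv_cancel_left _ _ hUdet.isUnit, Matrix.mul_nonsing_inv _ hUdet.isUnit,
      Matrix.mul_one]
  -- L⁻¹ has unit diagonal
  have hLinvdiag : ∀ i : Fin n, L⁻¹ i i = 1 := by
    intro i
    have h1 : (L * L⁻¹) i i = 1 := by
      rw [Matrix.mul_nonsing_inv L hLdet.isUnit, Matrix.one_apply_eq]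
    rw [Matrix.mul_apply, Finset.sum_eq_single i
      (fun k _ hk => by
        rcases lt_or_gt_of_ne hk with h | h
        · rw [hLinv (OrderDual.toDual_lt_toDual.mpr h), mul_zero]
        · rw [hL.1 i k h, zero_mul])
      (fun h => absurd (Finset.mem_univ i) h)] at h1
    rw [hL.2 i, one_mul] at h1
    exact h1
  -- upper entries of L⁻¹ * D * L vanish
  have hupper : ∀ i j : Fin n, i < j → (L⁻¹ * Matrix.diagonal d * L) i j = 0 := by
    intro i j hij
    rw [Matrix.mul_apply]
    refine Finset.sum_eq_zero fun k _ => ?_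
    rcases lt_or_ge i k with h | h
    · rw [Matrix.mul_diagonal, hLinv (OrderDual.toDual_lt_toDual.mpr h), zero_mul, zero_mul]
    · rw [hL.1 k j (lt_of_le_of_lt h hij), mul_zero]
  -- diagonal entries
  have hdiag : ∀ i : Fin n, (L⁻¹ * Matrix.diagonal d * L) i i = d i := by
    intro i
    rw [Matrix.mul_apply, Finset.sum_eq_single i
      (fun k _ hk => by
        rcases lt_or_gt_of_ne hk with h | h
        · rw [hL.1 k i h, mul_zero]
        · rw [Matrix.mul_diagonal, hLinv (OrderDual.toDual_lt_toDual.mpr h), zero_mul, zero_mul])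
      (fun h => absurd (Finset.mem_univ i) h)]
    rw [Matrix.mul_diagonal, hLinvdiag i, hL.2 i, one_mul, mul_one]
  -- entries below the subdiagonal vanish, using the U-side form
  have hUT : ∀ i k : Fin n, (k : ℕ) + 1 < (i : ℕ) → (U * T) i k = 0 := by
    intro i k h
    rw [Matrix.mul_apply]
    refine Finset.sum_eq_zero fun l _ => ?_
    rcases lt_or_ge l i with hl | hl
    · rw [hU.1 i l hl, zero_mul]
    · rw [htri l k (Or.inr (lt_of_lt_of_le h hl)), mul_zero]
  have hlower : ∀ i j : Fin n, (j : ℕ) + 1 < (i : ℕ) → (U * T * U⁻¹) i j = 0 := by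
    intro i j h
    rw [Matrix.mul_apply]
    refine Finset.sum_eq_zero fun k _ => ?_
    rcases le_or_gt k j with hk | hk
    · rw [hUT i k (lt_of_le_of_lt (Nat.succ_le_succ hk) h), zero_mul]
    · rw [hUinv hk, mul_zero]
  refine ⟨key, ?_, ?_⟩
  · intro i j h1 h2
    rcases lt_or_gt_of_ne h1 with h | h
    · rw [key]
      exact hupper i j (Fin.lt_def.mpr h)
    · exact hlower i j (lt_of_le_of_ne (Nat.succ_le_of_lt h) (Ne.symm h2))
  · intro i
    rw [key]
    exact hdiag i
end

section
/- Explicit formula for L_π: given distinct λᵢ^π and reals βᵢ^π, the lower unipotent matrix L with entries L_{ij} = (β_j^π ⋯ β_{i−1}^π) / ((λ_i^π − λ_j^π)(λ_i^π − λ_{j+1}^π) ⋯ (λ_i^π − λ_{i−1}^π)) for j < i, L_{ii} = 1, satisfies L B_π = Λ^π L, where B_π is the lower bidiagonal matrix with diagonal Λ^π and subdiagonal entries βᵢ^π. -/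
/-! Row `i` of `L` is a left eigenvector of `B` for `λᵢ`: entry `(i, j)` of `L B = Λ L` reads
`βⱼ L_{i,j+1} = (λᵢ − λⱼ) L_{ij}`, and this holds because the products defining `L_{ij}` are
those defining `L_{i,j+1}` with the factors `βⱼ` and `λᵢ − λⱼ` peeled off. -/

open Matrix

open Finset

theorem mul_prod_div_prod_Ico_succ {K : Type*} [Field K] (f g : ℕ → K) {a b : ℕ} (hab : a < b)
    (hg : g a ≠ 0) :
    f a * ((∏ k ∈ Ico (a + 1) b, f k) / ∏ k ∈ Ico (a + 1) b, g k) =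
      g a * ((∏ k ∈ Ico a b, f k) / ∏ k ∈ Ico a b, g k) := by
  rw [prod_eq_prod_Ico_succ_bot hab f, prod_eq_prod_Ico_succ_bot hab g, mul_div_mul_comm,
    ← mul_assoc, mul_div_cancel₀ _ hg]

def lowerBidiagonal {R : Type*} [Zero R] (n : ℕ) (d β : ℕ → R) : Matrix (Fin n) (Fin n) R :=
  of fun i j => if (i : ℕ) = j then d i else if (i : ℕ) = j + 1 then β j else 0

theorem mul_lowerBidiagonal_apply {R : Type*} [NonUnitalNonAssocSemiring R] {n : ℕ}
    (L : Matrix (Fin n) (Fin n) R) (d β : ℕ → R) (i j : Fin n) :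
    (L * lowerBidiagonal n d β) i j =
      L i j * d j + if h : (j : ℕ) + 1 < n then L i ⟨j + 1, h⟩ * β j else 0 := by
  have hsplit : ∀ k : Fin n, L i k * lowerBidiagonal n d β k j =
      (if k = j then L i j * d j else 0) + if (k : ℕ) = j + 1 then L i k * β j else 0 := by
    intro k
    rcases eq_or_ne k j with rfl | hkj
    · simp [lowerBidiagonal]
    · simp [lowerBidiagonal, Fin.val_ne_of_ne hkj, hkj, mul_ite]
  rw [mul_apply, sum_congr rfl fun k _ => hsplit k, sum_add_distrib, sum_ite_eq',
    if_pos (mem_univ _)]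
  congr 1
  split_ifs with h
  · rw [sum_eq_single ⟨j + 1, h⟩] <;> simp +contextual [Fin.ext_iff]
  · exact sum_eq_zero fun k _ => if_neg (by omega)

def bidiagLeftEigvec {K : Type*} [Field K] (lam β : ℕ → K) (i j : ℕ) : K :=
  if j ≤ i then (∏ k ∈ Ico j i, β k) / ∏ k ∈ Ico j i, (lam i - lam k) else 0

theorem bidiagLeftEigvec_recurrence {K : Type*} [Field K] (lam β : ℕ → K) (i j : ℕ)
    (hne : j < i → lam j ≠ lam i) :
    bidiagLeftEigvec lam β i j * lam j + bidiagLeftEigvec lam β i (j + 1) * β j =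
      lam i * bidiagLeftEigvec lam β i j := by
  rcases lt_trichotomy j i with hji | rfl | hij
  · have key := mul_prod_div_prod_Ico_succ β (fun k => lam i - lam k) hji
      (sub_ne_zero.2 (hne hji).symm)
    rw [bidiagLeftEigvec, bidiagLeftEigvec, if_pos hji.le, if_pos (Nat.succ_le_of_lt hji)]
    linear_combination key
  · simp [bidiagLeftEigvec]
  · simp [bidiagLeftEigvec, not_le.2 hij, not_le.2 (Nat.lt_succ_of_lt hij)]

/-- Explicit formula for `L_π`: the lower unipotent matrix with entries
`L i j = (β_j ⋯ β_{i-1}) / ((λ_i − λ_j) ⋯ (λ_i − λ_{i-1}))` for `j ≤ i`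
satisfies `L * B_π = Λ^π * L`, where `B_π` is lower bidiagonal with diagonal `Λ^π`
and subdiagonal entries `βᵢ`. -/
theorem stmt13 (n : ℕ) (lam β : ℕ → ℝ)
    (hlam : ∀ i j : Fin n, i ≠ j → lam (i : ℕ) ≠ lam (j : ℕ))
    (L B : Matrix (Fin n) (Fin n) ℝ)
    (hL : L = Matrix.of fun i j : Fin n =>
      if (j : ℕ) ≤ (i : ℕ) then
        (∏ k ∈ Finset.Ico (j : ℕ) (i : ℕ), β k) /
          (∏ k ∈ Finset.Ico (j : ℕ) (i : ℕ), (lam (i : ℕ) - lam k))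
      else 0)
    (hB : B = Matrix.of fun i j : Fin n =>
      if (i : ℕ) = (j : ℕ) then lam (i : ℕ)
      else if (i : ℕ) = (j : ℕ) + 1 then β (j : ℕ) else 0) :
    L * B = Matrix.diagonal (fun i : Fin n => lam (i : ℕ)) * L := by
  obtain rfl : L = of fun i j : Fin n => bidiagLeftEigvec lam β i j := hL
  obtain rfl : B = lowerBidiagonal n lam β := hB
  ext i j
  have hrec := bidiagLeftEigvec_recurrence lam β i j fun hji => hlam j i (Fin.ne_of_lt hji)
  rw [mul_lowerBidiagonal_apply, diagonal_mul]
  split_ifs with hj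
  · exact hrec
  · have hzero : bidiagLeftEigvec lam β i (j + 1) = 0 := if_neg (by omega)
    simpa [hzero] using hrec
end

section
/- For a Jacobi matrix J with π-normalized diagonalization J = Q_πᵀ Λ^π Q_π, the norming constants w_{π(i)} = |(Q_π)_{i,1}| satisfy w_{π(i)} = w_{π(1)} · |β₁^π ⋯ β_{i−1}^π| / |(λᵢ^π − λ₁^π) ⋯ (λᵢ^π − λ_{i−1}^π)| for 2 ≤ i ≤ n, where βᵢ^π are the bidiagonal coordinates of J. -/
/-!
Since `U_π` is upper triangular, the first column of `Q_π = L_π U_π` is `(U_π)₁₁` times the first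
column of `L_π`. The bidiagonal matrix `B = L_π⁻¹ Λ^π L_π` has diagonal `Λ^π`, so the `(i, k)` entry
of `L_π B = Λ^π L_π` reads `(λᵢ^π − λ_k^π) (L_π)_{i,k} = β_k^π (L_π)_{i,k+1}`. Telescoping this
recurrence from `(L_π)_{i,i} = 1` down to `k = 1` expresses `(L_π)_{i,1}` as the claimed quotient.
-/

open Matrix

def IsLowerBidiag {R : Type*} [Zero R] {m : ℕ} (B : Matrix (Fin m) (Fin m) R) : Prop :=
  ∀ i j : Fin m, (i : ℕ) ≠ j → (i : ℕ) ≠ j + 1 → B i j = 0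

theorem Matrix.mul_apply_zero_of_blockTriangular {R : Type*} [NonUnitalNonAssocSemiring R]
    {m : ℕ} (L U : Matrix (Fin (m + 1)) (Fin (m + 1)) R) (hU : U.BlockTriangular id)
    (i : Fin (m + 1)) : (L * U) i 0 = L i 0 * U 0 0 := by
  rw [mul_apply, Fintype.sum_eq_single 0]
  intro k hk
  rw [hU (Fin.pos_of_ne_zero hk), mul_zero]

theorem Fin.mul_prod_Iio_eq_prod_Iio_mul {M : Type*} [CommMonoid M] {m : ℕ}
    {a b c : Fin (m + 1) → M}
    (h : ∀ k : Fin m, a k.castSucc * c k.castSucc = b k.castSucc * c k.succ) (i : Fin (m + 1)) :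
    c 0 * ∏ k ∈ Finset.Iio i, a k = (∏ k ∈ Finset.Iio i, b k) * c i := by
  induction i using Fin.induction with
  | zero =>
    rw [show Finset.Iio (0 : Fin (m + 1)) = ∅ from rfl, Finset.prod_empty, Finset.prod_empty,
      mul_one, one_mul]
  | succ k ih =>
    have hIio : Finset.Iio k.succ = Finset.Iic k.castSucc := Finset.val_inj.mp rfl
    rw [hIio, ← Finset.prod_Iio_mul_eq_prod_Iic, ← Finset.prod_Iio_mul_eq_prod_Iic, ← mul_assoc,
      ih, mul_assoc, mul_comm (c _), h, mul_assoc]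

namespace IsLowerBidiag

theorem apply_self_of_mul_eq_diagonal_mul {m : ℕ} {L B : Matrix (Fin m) (Fin m) ℝ}
    {d : Fin m → ℝ} (hB : IsLowerBidiag B) (hL : IsUnipLower L) (h : L * B = diagonal d * L)
    (k : Fin m) : B k k = d k := by
  have hkk := congrFun₂ h k k
  rw [diagonal_mul, hL.2 k, mul_one, mul_apply, Fintype.sum_eq_single k, hL.2 k, one_mul] at hkk
  · exact hkk
  intro j hjk
  rcases lt_or_gt_of_ne hjk with hlt | hgt
  · rw [hB j k (Fin.val_ne_of_ne hjk) (by omega), mul_zero]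
  · rw [hL.1 k j hgt, zero_mul]

variable {m : ℕ} {L B : Matrix (Fin (m + 1)) (Fin (m + 1)) ℝ} {d : Fin (m + 1) → ℝ}

theorem sub_mul_apply_castSucc (hB : IsLowerBidiag B) (hL : IsUnipLower L)
    (h : L * B = diagonal d * L) (i : Fin (m + 1)) (k : Fin m) :
    (d i - d k.castSucc) * L i k.castSucc = B k.succ k.castSucc * L i k.succ := by
  have hik := congrFun₂ h i k.castSucc
  rw [diagonal_mul, mul_apply, Fintype.sum_eq_add k.castSucc k.succ Fin.castSucc_lt_succ.ne,
    hB.apply_self_of_mul_eq_diagonal_mul hL h] at hik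
  · linear_combination -hik
  rintro j ⟨hj, hj'⟩
  rw [hB j k.castSucc (Fin.val_ne_of_ne hj) (fun e => hj' (Fin.ext e)), mul_zero]

theorem apply_zero_mul_prod_Iio (hB : IsLowerBidiag B) (hL : IsUnipLower L)
    (h : L * B = diagonal d * L) {β : Fin (m + 1) → ℝ}
    (hβ : ∀ k : Fin m, β k.castSucc = B k.succ k.castSucc) (i : Fin (m + 1)) :
    L i 0 * ∏ k ∈ Finset.Iio i, (d i - d k) = ∏ k ∈ Finset.Iio i, β k := by
  have htel := Fin.mul_prod_Iio_eq_prod_Iio_mul (a := fun k => d i - d k) (b := β) (c := L i)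
    (fun k => by rw [hβ, hB.sub_mul_apply_castSucc hL h]) i
  rwa [hL.2 i, mul_one] at htel

end IsLowerBidiag

theorem stmt14_general (n : ℕ) (lam : Fin (n + 1) → ℝ) (hlam : StrictMono lam)
    (π : Equiv.Perm (Fin (n + 1)))
    (Qπ L U B : Matrix (Fin (n + 1)) (Fin (n + 1)) ℝ)
    (hQLU : Qπ = L * U) (hL : IsUnipLower L) (hU : IsUpperTriPos U)
    (hB : L * B = Matrix.diagonal (fun i => lam (π i)) * L)
    (hBlow : ∀ i j : Fin (n + 1), (i : ℕ) ≠ (j : ℕ) → (i : ℕ) ≠ (j : ℕ) + 1 → B i j = 0)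
    (βf : Fin (n + 1) → ℝ)
    (hβ : ∀ k : Fin (n + 1), ∀ hk : (k : ℕ) + 1 < n + 1, βf k = B ⟨(k : ℕ) + 1, hk⟩ k) :
    ∀ i : Fin (n + 1),
      |Qπ i 0| = |Qπ 0 0| * |∏ k ∈ Finset.Iio i, βf k| /
        |∏ k ∈ Finset.Iio i, (lam (π i) - lam (π k))| := by
  intro i
  have hcol : ∀ j, Qπ j 0 = L j 0 * U 0 0 := fun j => hQLU ▸
    mul_apply_zero_of_blockTriangular L U (fun a b hba => hU.1 a b hba) j
  have hΔ : ∏ k ∈ Finset.Iio i, (lam (π i) - lam (π k)) ≠ 0 :=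
    Finset.prod_ne_zero_iff.mpr fun k hk =>
      sub_ne_zero.mpr ((hlam.injective.comp π.injective).ne (Finset.mem_Iio.mp hk).ne')
  have hL0 := IsLowerBidiag.apply_zero_mul_prod_Iio (d := fun k => lam (π k)) hBlow hL hB
    (fun k => hβ k.castSucc k.succ.isLt) i
  rw [eq_div_iff (abs_ne_zero.mpr hΔ), ← abs_mul, ← abs_mul, hcol i, hcol 0, hL.2 0, one_mul]
  congr 1
  linear_combination U 0 0 * hL0

/-- For a Jacobi matrix `J` with `π`-normalized diagonalization `J = Q_πᵀ Λ^π Q_π`,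
the norming constants `w_{π(i)} = |(Q_π)_{i,1}|` satisfy
`w_{π(i)} = w_{π(1)} · |β₁ ⋯ β_{i-1}| / |(λᵢ^π − λ₁^π) ⋯ (λᵢ^π − λ_{i-1}^π)|`,
where the `βᵢ` are the bidiagonal coordinates of `J`. -/
theorem stmt14 (n : ℕ) (lam : Fin (n + 1) → ℝ) (hlam : StrictMono lam)
    (π : Equiv.Perm (Fin (n + 1)))
    (J Qπ L U B : Matrix (Fin (n + 1)) (Fin (n + 1)) ℝ)
    (hsym : Jᵀ = J) (htri : IsTridiag J)
    (hpos : ∀ i j : Fin (n + 1), (i : ℕ) = (j : ℕ) + 1 → 0 < J i j)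
    (hQ : IsOrth Qπ) (hLUpos : LUPositive Qπ)
    (hdiag : J = Qπᵀ * Matrix.diagonal (fun i => lam (π i)) * Qπ)
    (hQLU : Qπ = L * U) (hL : IsUnipLower L) (hU : IsUpperTriPos U)
    (hB : L * B = Matrix.diagonal (fun i => lam (π i)) * L)
    (hBlow : ∀ i j : Fin (n + 1), (i : ℕ) ≠ (j : ℕ) → (i : ℕ) ≠ (j : ℕ) + 1 → B i j = 0)
    (βf : Fin (n + 1) → ℝ)
    (hβ : ∀ k : Fin (n + 1), ∀ hk : (k : ℕ) + 1 < n + 1, βf k = B ⟨(k : ℕ) + 1, hk⟩ k) :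
    ∀ i : Fin (n + 1),
      |Qπ i 0| = |Qπ 0 0| * |∏ k ∈ Finset.Iio i, βf k| /
        |∏ k ∈ Finset.Iio i, (lam (π i) - lam (π k))| :=
  stmt14_general n lam hlam π Qπ L U B hQLU hL hU hB hBlow βf hβ
end

section
/- If E = diag(σ₁,...,σₙ) is a sign diagonal and T ∈ U_Λ^π has bidiagonal coordinates (β₁^π,...,β_{n−1}^π), then ETE has bidiagonal coordinates (σ₁σ₂β₁^π,...,σ_{n−1}σₙβ_{n−1}^π); equivalently, the bidiagonal matrix of ETE is E B_π E. -/
open Matrix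

/-- If `E = diag(σ₁, …, σₙ)` is a sign diagonal and `T ∈ U_Λ^π` has bidiagonal matrix
`B_π`, then `E T E ∈ U_Λ^π` with `π`-normalized data `E Q_π E`, `E L E`, `E U E` and
bidiagonal matrix `E B_π E` (so the bidiagonal coordinates get multiplied by
`σᵢ σ_{i+1}`). -/
theorem stmt15 (n : ℕ) (lam : Fin n → ℝ) (hlam : Function.Injective lam)
    (π : Equiv.Perm (Fin n)) (T Qπ L U B E : Matrix (Fin n) (Fin n) ℝ)
    (hQ : IsOrth Qπ) (hLUpos : LUPositive Qπ)
    (hT : T = Qπᵀ * Matrix.diagonal (fun i => lam (π i)) * Qπ)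
    (hQLU : Qπ = L * U) (hL : IsUnipLower L) (hU : IsUpperTriPos U)
    (hB : L * B = Matrix.diagonal (fun i => lam (π i)) * L)
    (hE : IsSignDiag E) :
    IsOrth (E * Qπ * E) ∧ LUPositive (E * Qπ * E) ∧
      E * T * E = (E * Qπ * E)ᵀ * Matrix.diagonal (fun i => lam (π i)) * (E * Qπ * E) ∧
      E * Qπ * E = (E * L * E) * (E * U * E) ∧
      IsUnipLower (E * L * E) ∧ IsUpperTriPos (E * U * E) ∧
      (E * L * E) * (E * B * E) = Matrix.diagonal (fun i => lam (π i)) * (E * L * E) ∧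
      (∀ i j : Fin n, (i : ℕ) = (j : ℕ) + 1 → (E * B * E) i j = E i i * E j j * B i j) := by
  obtain ⟨hEoff, hEdiag⟩ := hE
  have hQ' : Qπᵀ * Qπ = 1 := hQ
  have hEd : E = Matrix.diagonal (fun i => E i i) := by
    ext i j
    by_cases h : i = j
    · subst h; simp
    · simp [Matrix.diagonal_apply_ne _ h, hEoff i j h]
  set d : Fin n → ℝ := fun i => E i i with hd
  have hd2 : ∀ i, d i * d i = 1 := by
    intro i; rcases hEdiag i with h | h <;> simp [d, h]
  have hEE : E * E = 1 := by
    rw [hEd, Matrix.diagonal_mul_diagonal]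
    rw [show (fun i => d i * d i) = fun _ => (1 : ℝ) from funext hd2]
    simp
  have hET : Eᵀ = E := by rw [hEd]; exact Matrix.diagonal_transpose _
  have hEcl : ∀ X : Matrix (Fin n) (Fin n) ℝ, E * (E * X) = X := by
    intro X; rw [← mul_assoc, hEE, one_mul]
  have hcomm : ∀ f : Fin n → ℝ, E * Matrix.diagonal f = Matrix.diagonal f * E := by
    intro f
    rw [hEd, Matrix.diagonal_mul_diagonal, Matrix.diagonal_mul_diagonal,
      show (fun i => d i * f i) = (fun i => f i * d i) from funext fun i => mul_comm _ _]
  have hcomm' : ∀ (f : Fin n → ℝ) (X : Matrix (Fin n) (Fin n) ℝ),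
      E * (Matrix.diagonal f * X) = Matrix.diagonal f * (E * X) := by
    intro f X; rw [← mul_assoc, hcomm, mul_assoc]
  have hent : ∀ (M : Matrix (Fin n) (Fin n) ℝ) (i j : Fin n),
      (E * M * E) i j = d i * M i j * d j := by
    intro M i j
    rw [hEd]
    simp [Matrix.diagonal_mul, Matrix.mul_diagonal, mul_comm, mul_assoc, mul_left_comm]
  refine ⟨?_, ?_, ?_, ?_, ?_, ?_, ?_, ?_⟩
  · -- orthogonality
    show (E * Qπ * E)ᵀ * (E * Qπ * E) = 1
    simp only [Matrix.transpose_mul, hET, mul_assoc]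
    rw [hEcl, ← mul_assoc Qπᵀ Qπ, hQ', one_mul, hEE]
  · -- LU positivity
    intro k h
    have key : (Matrix.of fun i j : Fin k => (E * Qπ * E) (Fin.castLE h i) (Fin.castLE h j))
        = Matrix.diagonal (fun i : Fin k => d (Fin.castLE h i)) *
          (Matrix.of fun i j : Fin k => Qπ (Fin.castLE h i) (Fin.castLE h j)) *
          Matrix.diagonal (fun i : Fin k => d (Fin.castLE h i)) := by
      ext i j
      simp [Matrix.diagonal_mul, Matrix.mul_diagonal, hent]
    have hpos := hLUpos k h
    unfold leadingMinor at hpos ⊢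
    rw [key, Matrix.det_mul, Matrix.det_mul, Matrix.det_diagonal]
    have : (∏ i : Fin k, d (Fin.castLE h i)) *
        (Matrix.of fun i j : Fin k => Qπ (Fin.castLE h i) (Fin.castLE h j)).det *
        (∏ i : Fin k, d (Fin.castLE h i))
        = ((∏ i : Fin k, d (Fin.castLE h i)) * (∏ i : Fin k, d (Fin.castLE h i))) *
          (Matrix.of fun i j : Fin k => Qπ (Fin.castLE h i) (Fin.castLE h j)).det := by ring
    rw [this, ← Finset.prod_mul_distrib]
    simp only [hd2]
    simpa using hpos
  · -- similarity
    rw [hT]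
    simp only [Matrix.transpose_mul, hET, mul_assoc]
    rw [hcomm', hEcl]
  · -- factorization
    rw [hQLU]
    simp only [mul_assoc]
    rw [hEcl]
  · -- unipotent lower
    refine ⟨fun i j hij => ?_, fun i => ?_⟩
    · rw [hent, hL.1 i j hij]; ring
    · rw [hent, hL.2 i, mul_one, hd2 i]
  · refine ⟨fun i j hij => ?_, fun i => ?_⟩
    · rw [hent, hU.1 i j hij]; ring
    · rw [hent]
      have : d i * U i i * d i = (d i * d i) * U i i := by ring
      rw [this, hd2 i, one_mul]; exact hU.2 i
  · -- bidiagonal intertwining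
    simp only [mul_assoc]
    rw [hEcl, ← mul_assoc L B E, hB]
    simp only [mul_assoc]
    rw [hcomm']
  · intro i j _
    rw [hent]; ring
end

section
/- For T ∈ U_Λ^π, the i-th bidiagonal coordinate βᵢ^π(T) vanishes if and only if the entry T_{i+1,i} vanishes; moreover βᵢ^π(T) and T_{i+1,i} always have the same sign. -/
open Matrix

/-- For `T ∈ U_Λ^π` with bidiagonal matrix `B_π`, the bidiagonal coordinate
`βᵢ^π = (B_π) (i+1) i` vanishes iff the entry `T (i+1) i` vanishes, and the two always
have the same sign. -/
theorem stmt16 (n : ℕ) (lam : Fin n → ℝ) (hlam : Function.Injective lam)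
    (π : Equiv.Perm (Fin n)) (T Qπ L U B : Matrix (Fin n) (Fin n) ℝ)
    (hsym : Tᵀ = T) (htri : IsTridiag T)
    (hQ : IsOrth Qπ) (hLUpos : LUPositive Qπ)
    (hT : T = Qπᵀ * Matrix.diagonal (fun i => lam (π i)) * Qπ)
    (hQLU : Qπ = L * U) (hL : IsUnipLower L) (hU : IsUpperTriPos U)
    (hB : L * B = Matrix.diagonal (fun i => lam (π i)) * L) :
    ∀ i j : Fin n, (i : ℕ) = (j : ℕ) + 1 →
      (B i j = 0 ↔ T i j = 0) ∧ (0 < B i j ↔ 0 < T i j) := by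
  obtain ⟨hLlow, hLdiag⟩ := hL
  obtain ⟨hUup, hUdiag⟩ := hU
  set Λ := Matrix.diagonal (fun i => lam (π i)) with hΛ
  -- L is invertible
  have hdetL : L.det = 1 := by
    rw [Matrix.det_of_lowerTriangular L (fun i j h => hLlow i j h)]
    simp [hLdiag]
  haveI : Invertible L := L.invertibleOfIsUnitDet (by simp [hdetL])
  have hQQT : Qπ * Qπᵀ = 1 := mul_eq_one_comm.mp hQ
  -- key intertwining relation U T = B U
  have hUT : U * T = B * U := by
    have h1 : L * (U * T) = L * (B * U) := by
      calc L * (U * T) = (L * U) * T := by rw [Matrix.mul_assoc]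
        _ = Qπ * T := by rw [hQLU]
        _ = Qπ * Qπᵀ * Λ * Qπ := by rw [hT]; simp only [Matrix.mul_assoc]
        _ = Λ * Qπ := by rw [hQQT, Matrix.one_mul]
        _ = Λ * L * U := by rw [hQLU, Matrix.mul_assoc]
        _ = (L * B) * U := by rw [hB]
        _ = L * (B * U) := by rw [Matrix.mul_assoc]
    have h2 := congrArg (fun M => L⁻¹ * M) h1
    simpa [← Matrix.mul_assoc, Matrix.nonsing_inv_mul L (by simp [hdetL])] using h2
  -- B is upper Hessenberg: B p q = 0 when q + 1 < p
  have hess : ∀ m : ℕ, ∀ q p : Fin n, (q : ℕ) = m → (q : ℕ) + 1 < (p : ℕ) → B p q = 0 := by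
    intro m
    induction m using Nat.strong_induction_on with
    | _ m IH =>
      intro q p hq hpq
      have hBU : (B * U) p q = B p q * U q q := by
        rw [Matrix.mul_apply]
        apply Finset.sum_eq_single q
        · intro k _ hk
          rcases lt_or_gt_of_ne hk with hlt | hgt
          · -- k < q : B p k = 0 by induction
            have hk1 : (k : ℕ) + 1 < (p : ℕ) := by
              have : (k : ℕ) < (q : ℕ) := hlt
              omega
            rw [IH (k : ℕ) (by omega) k p rfl hk1, zero_mul]
          · -- q < k : U k q = 0
            rw [hUup k q hgt, mul_zero]
        · intro h; exact absurd (Finset.mem_univ q) h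
      have hUT0 : (U * T) p q = 0 := by
        rw [Matrix.mul_apply]
        apply Finset.sum_eq_zero
        intro k _
        rcases lt_or_ge (k : ℕ) (p : ℕ) with hlt | hle
        · rw [hUup p k (by exact hlt), zero_mul]
        · rw [htri k q (Or.inr (by omega)), mul_zero]
      have : B p q * U q q = 0 := by rw [← hBU, ← hUT, hUT0]
      exact (mul_eq_zero.mp this).resolve_right (hUdiag q).ne'
  intro i j hij
  have hji : j < i := by rw [Fin.lt_def]; omega
  -- compute the (i, j) entry of U T = B U
  have hleft : (U * T) i j = U i i * T i j := by
    rw [Matrix.mul_apply]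
    apply Finset.sum_eq_single i
    · intro k _ hk
      rcases lt_or_gt_of_ne hk with hlt | hgt
      · rw [hUup i k hlt, zero_mul]
      · rw [htri k j (Or.inr (by have h' : (i:ℕ) < (k:ℕ) := hgt; omega)), mul_zero]
    · intro h; exact absurd (Finset.mem_univ i) h
  have hright : (B * U) i j = B i j * U j j := by
    rw [Matrix.mul_apply]
    apply Finset.sum_eq_single j
    · intro k _ hk
      rcases lt_or_gt_of_ne hk with hlt | hgt
      · rw [hess (k : ℕ) k i rfl (by have h' : (k:ℕ) < (j:ℕ) := hlt; omega), zero_mul]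
      · rw [hUup k j hgt, mul_zero]
    · intro h; exact absurd (Finset.mem_univ j) h
  have key : U i i * T i j = B i j * U j j := by rw [← hleft, ← hright, hUT]
  have h1 : B i j = U i i * T i j / U j j := by
    field_simp [(hUdiag j).ne']
    linarith [key]
  have h2 : T i j = B i j * U j j / U i i := by
    field_simp [(hUdiag i).ne']
    linarith [key]
  refine ⟨⟨fun h => ?_, fun h => ?_⟩, fun h => ?_, fun h => ?_⟩
  · rw [h2, h]; ring
  · rw [h1, h]; ring
  · rw [h2]; exact div_pos (mul_pos h (hUdiag j)) (hUdiag i)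
  · rw [h1]; exact div_pos (mul_pos (hUdiag i) h) (hUdiag j)
end

section
/- Along the one-parameter family B_π(t) = Λ^π + t·e_{i+1}e_iᵀ, the corresponding tridiagonal matrix T(t) = φ_π(0,...,t,...,0) satisfies (T(t))_{i+1,i} = (λ_{i+1}^π − λ_i^π)² · t / ((λ_{i+1}^π − λ_i^π)² + t²), so the quotient βᵢ^π/T_{i+1,i} equals ((λ_{i+1}^π − λ_i^π)² + t²)/(λ_{i+1}^π − λ_i^π)² and tends to 1 as t → 0. -/
open Matrix

/-!
Because the `λ`'s are distinct, `L (Λ + t E_{ij}) = Λ L` forces `L = 1 + σ E_{ij}` with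
`σ = t / (λ_i - λ_j)`. This matrix has an explicit QR factorization whose orthogonal factor is the
Givens rotation in the `(i, j)`-plane with cosine `c = (1 + σ²)^(-1/2)` and sine `cσ`; QR
factorizations with positive diagonal are unique, so `Q` is that rotation and
`T_{ij} = c² σ (λ_i - λ_j) = (λ_i - λ_j)² t / ((λ_i - λ_j)² + t²)`.
-/

theorem eq_one_add_single_of_mul_eq_diagonal_mul {K ι : Type*} [Field K] [Fintype ι]
    [DecidableEq ι] {lam : ι → K} (hlam : Function.Injective lam) {i j : ι} (hij : i ≠ j) {t : K}
    {L : Matrix ι ι K} (hdiag : ∀ a, L a a = 1)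
    (h : L * (diagonal lam + single i j t) = diagonal lam * L) :
    L = 1 + single i j (t / (lam i - lam j)) := by
  have hentry : ∀ a b, L a b * (lam b - lam a) + (L * single i j t) a b = 0 := fun a b => by
    have := congr_fun₂ h a b
    rw [mul_add, Matrix.add_apply, mul_diagonal, diagonal_mul] at this
    linear_combination this
  have hsep : ∀ a b, a ≠ b → L a b * (lam b - lam a) = 0 → L a b = 0 := fun a b hab h0 =>
    (mul_eq_zero.mp h0).resolve_right (sub_ne_zero.mpr fun h' => hab (hlam h').symm)
  have hoff : ∀ a b, b ≠ j → a ≠ b → L a b = 0 := fun a b hbj hab =>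
    hsep a b hab (by simpa [mul_single_apply_of_ne _ _ _ _ _ hbj] using hentry a b)
  ext a b
  by_cases hab : a = b
  · subst hab
    have hoffsupp : ¬(i = a ∧ j = a) := fun h => hij (h.1.trans h.2.symm)
    simp [hdiag, single_apply_of_ne _ _ _ _ _ hoffsupp]
  simp only [Matrix.add_apply, one_apply_ne hab, zero_add]
  by_cases hbj : b = j
  · subst hbj
    have hb := hentry a b
    rw [mul_single_apply_same] at hb
    by_cases hai : a = i
    · subst hai
      rw [hdiag] at hb
      rw [single_apply_same, eq_div_iff (sub_ne_zero.mpr (hlam.ne hij))]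
      linear_combination -hb
    · rw [hoff a i hij hai, zero_mul, add_zero] at hb
      rw [hsep a b hab hb, single_apply_of_row_ne (Ne.symm hai)]
  · rw [hoff a b hbj hab, single_apply_of_col_ne _ _ (Ne.symm hbj)]

def givens {R ι : Type*} [CommRing R] [DecidableEq ι] (i j : ι) (c s : R) : Matrix ι ι R :=
  1 + (c - 1) • (single i i 1 + single j j 1) + s • (single i j 1 - single j i 1)

section Givens

variable {R ι : Type*} [CommRing R] [Fintype ι] [DecidableEq ι] {i j : ι}

theorem givens_transpose_mul_self (hij : i ≠ j) {c s : R} (h : c ^ 2 + s ^ 2 = 1) :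
    (givens i j c s)ᵀ * givens i j c s = 1 := by
  simp only [givens, transpose_add, transpose_smul, transpose_sub, transpose_one, transpose_single,
    add_mul, mul_add, sub_mul, mul_sub, smul_mul_assoc, mul_smul_comm, one_mul, mul_one,
    single_mul_single_same, single_mul_single_of_ne _ _ _ _ hij,
    single_mul_single_of_ne _ _ _ _ hij.symm]
  linear_combination (norm := module) h • (single i i (1 : R) + single j j 1)

theorem givens_transpose_mul_one_add_single (hij : i ≠ j) (c σ : R) :
    (givens i j c (c * σ))ᵀ * (1 + single i j σ) =
      1 + (c - 1) • single i i 1 + (c * (1 + σ ^ 2) - 1) • single j j 1 +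
        (c * σ) • single j i 1 := by
  rw [show single i j σ = σ • single i j (1 : R) by rw [smul_single, smul_eq_mul, mul_one]]
  simp only [givens, transpose_add, transpose_smul, transpose_sub, transpose_one, transpose_single,
    add_mul, mul_add, sub_mul, smul_mul_assoc, mul_smul_comm, one_mul, mul_one,
    single_mul_single_same, single_mul_single_of_ne _ _ _ _ hij.symm]
  module

theorem givens_transpose_mul_diagonal_mul_apply (hij : i ≠ j) (c s : R) (lam : ι → R) :
    ((givens i j c s)ᵀ * diagonal lam * givens i j c s) i j = c * s * (lam i - lam j) := by
  rw [mul_apply, Fintype.sum_eq_add i j hij]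
  · simp [givens, hij, hij.symm, mul_add, mul_comm, mul_left_comm, sub_eq_add_neg]
  · rintro a ⟨hai, haj⟩
    simp [givens, Ne.symm hai, Ne.symm haj]

end Givens

theorem Matrix.IsUpperTriangular.mul_apply_self {ι R : Type*} [Fintype ι] [LinearOrder ι]
    [Semiring R] {A B : Matrix ι ι R} (hA : A.IsUpperTriangular) (hB : B.IsUpperTriangular)
    (a : ι) : (A * B) a a = A a a * B a a := by
  rw [mul_apply, Finset.sum_eq_single a (fun c _ hca => ?_) (by simp)]
  rcases hca.lt_or_gt with h | h
  · rw [hA h, zero_mul]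
  · rw [hB h, mul_zero]

section

variable {n : ℕ}

theorem IsOrth.mul_transpose {Q : Matrix (Fin n) (Fin n) ℝ} (hQ : IsOrth Q) : Q * Qᵀ = 1 :=
  mul_eq_one_comm.mp hQ

theorem IsUpperTriPos.isUpperTriangular {R : Matrix (Fin n) (Fin n) ℝ} (hR : IsUpperTriPos R) :
    R.IsUpperTriangular :=
  fun a b h => hR.1 a b h

theorem IsUpperTriPos.isUnit_det {R : Matrix (Fin n) (Fin n) ℝ} (hR : IsUpperTriPos R) :
    IsUnit R.det := by
  rw [det_of_isUpperTriangular hR.isUpperTriangular]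
  exact (Finset.prod_pos fun a _ => hR.2 a).ne'.isUnit

theorem eq_one_of_isOrth_of_isUpperTriangular {U : Matrix (Fin n) (Fin n) ℝ} (hU : IsOrth U)
    (htri : U.IsUpperTriangular) (hdiag : ∀ a, 0 < U a a) : U = 1 := by
  have : Invertible U := invertibleOfLeftInverse _ _ hU
  have hlow : Uᵀ.IsUpperTriangular :=
    inv_eq_left_inv hU ▸ blockTriangular_inv_of_blockTriangular htri
  have hU_diagonal : U = diagonal U.diag := by
    ext a b
    rcases lt_trichotomy a b with h | rfl | h
    · simpa [diagonal_apply_ne _ h.ne] using hlow h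
    · simp
    · simp [diagonal_apply_ne _ h.ne', htri h]
  have hsq : ∀ a, U a a * U a a = 1 := fun a => by
    have := congr_fun₂ hU a a
    rwa [hU_diagonal, diagonal_transpose, diagonal_mul_diagonal, diagonal_apply_eq,
      one_apply_eq] at this
  rw [hU_diagonal, ← diagonal_one]
  congr with a
  exact ((mul_self_eq_one_iff.mp (hsq a)).resolve_right (by linarith [hdiag a]))

theorem IsOrth.eq_of_mul_eq {Q Q' R R' : Matrix (Fin n) (Fin n) ℝ} (hQ : IsOrth Q)
    (hR : IsUpperTriPos R) (hQ' : IsOrth Q') (hR' : IsUpperTriPos R') (h : Q * R = Q' * R') :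
    Q = Q' := by
  set U := Q'ᵀ * Q
  have hUR : U * R = R' := by
    rw [Matrix.mul_assoc, h, ← Matrix.mul_assoc, hQ', Matrix.one_mul]
  have hU : IsOrth U := by
    rw [IsOrth, transpose_mul, transpose_transpose, Matrix.mul_assoc, ← Matrix.mul_assoc Q',
      hQ'.mul_transpose, Matrix.one_mul, hQ]
  have : Invertible R := R.invertibleOfIsUnitDet hR.isUnit_det
  have hU_eq : U = R' * R⁻¹ := by
    rw [← hUR, Matrix.mul_assoc, mul_inv_of_invertible, Matrix.mul_one]
  have htri : U.IsUpperTriangular := hU_eq ▸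
    hR'.isUpperTriangular.mul (blockTriangular_inv_of_blockTriangular hR.isUpperTriangular)
  have hdiag : ∀ a, 0 < U a a := fun a => by
    have := hR'.2 a
    rw [← hUR, htri.mul_apply_self hR.isUpperTriangular] at this
    exact pos_of_mul_pos_left this (hR.2 a).le
  calc Q = Q' * U := by rw [← Matrix.mul_assoc, hQ'.mul_transpose, Matrix.one_mul]
    _ = Q' := by rw [eq_one_of_isOrth_of_isUpperTriangular hU htri hdiag, Matrix.mul_one]

theorem isUpperTriPos_one_add_single {i j : Fin n} (hji : j < i) {c d e : ℝ} (hc : 0 < c)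
    (hd : 0 < d) :
    IsUpperTriPos (1 + (c - 1) • single i i 1 + (d - 1) • single j j 1 + e • single j i 1) := by
  refine ⟨fun a b hba => ?_, fun a => ?_⟩
  · simp only [Matrix.add_apply, Matrix.smul_apply, smul_eq_mul, one_apply_ne hba.ne',
      single_apply]
    split_ifs <;> grind
  · simp only [Matrix.add_apply, Matrix.smul_apply, smul_eq_mul, one_apply_eq, single_apply]
    split_ifs <;> grind

end

/-- Along the one-parameter family `B_π(t) = Λ^π + t e_{i+1} e_iᵀ`, the tridiagonal matrix
`T(t) = Q(L_π)ᵀ Λ^π Q(L_π)` satisfies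
`T(t) (i+1) i = (λ_{i+1}^π − λ_i^π)² t / ((λ_{i+1}^π − λ_i^π)² + t²)`, so for `t ≠ 0` the
quotient `βᵢ^π / T_{i+1,i} = ((λ_{i+1}^π − λ_i^π)² + t²) / (λ_{i+1}^π − λ_i^π)²`
(which tends to `1` as `t → 0`). -/
theorem stmt17 (n : ℕ) (lam : Fin n → ℝ) (hlam : Function.Injective lam)
    (i j : Fin n) (hij : (i : ℕ) = (j : ℕ) + 1) (t : ℝ)
    (L Q R : Matrix (Fin n) (Fin n) ℝ)
    (hL : IsUnipLower L)
    (hLB : L * (Matrix.diagonal lam + Matrix.single i j t) = Matrix.diagonal lam * L)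
    (hQR : L = Q * R) (hQ : IsOrth Q) (hR : IsUpperTriPos R) :
    (Qᵀ * Matrix.diagonal lam * Q) i j =
        (lam i - lam j) ^ 2 * t / ((lam i - lam j) ^ 2 + t ^ 2) ∧
      (t ≠ 0 → t / ((Qᵀ * Matrix.diagonal lam * Q) i j) =
        ((lam i - lam j) ^ 2 + t ^ 2) / (lam i - lam j) ^ 2) := by
  have hji : j < i := Fin.lt_def.mpr (by omega)
  have hd : lam i - lam j ≠ 0 := sub_ne_zero.mpr (hlam.ne hji.ne')
  set σ := t / (lam i - lam j)
  set c := (√(1 + σ ^ 2))⁻¹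
  have hc : 0 < c := by positivity
  have hc_sq : c ^ 2 * (1 + σ ^ 2) = 1 := by
    rw [inv_pow, Real.sq_sqrt (by positivity), inv_mul_cancel₀ (by positivity)]
  have hG : IsOrth (givens i j c (c * σ)) :=
    givens_transpose_mul_self hji.ne' (by linear_combination hc_sq)
  have hLG : L = givens i j c (c * σ) *
      (1 + (c - 1) • single i i 1 + (c * (1 + σ ^ 2) - 1) • single j j 1 +
        (c * σ) • single j i 1) := by
    rw [← givens_transpose_mul_one_add_single hji.ne', ← Matrix.mul_assoc, hG.mul_transpose,
      Matrix.one_mul, eq_one_add_single_of_mul_eq_diagonal_mul hlam hji.ne' hL.2 hLB]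
  have hQG : Q = givens i j c (c * σ) := hQ.eq_of_mul_eq hR hG
    (isUpperTriPos_one_add_single hji hc (by positivity)) (hQR ▸ hLG)
  have hT : (Qᵀ * diagonal lam * Q) i j =
      (lam i - lam j) ^ 2 * t / ((lam i - lam j) ^ 2 + t ^ 2) := by
    rw [hQG, givens_transpose_mul_diagonal_mul_apply hji.ne']
    have hσ : σ * (lam i - lam j) = t := div_mul_cancel₀ t hd
    clear_value c σ
    subst hσ
    rw [eq_div_iff (by positivity)]
    linear_combination (σ * (lam i - lam j) ^ 3) * hc_sq
  refine ⟨hT, fun ht => ?_⟩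
  rw [hT]
  field_simp
end
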